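/- arXiv:1910.12247 — 9 statements merged into one kernel-verified Lean document; each statement's English description precedes it below -/
import Mathlib

section
/- The Varshamov-Tenengolts code corrects a single deletion: if c and c' are binary sequences of length N with ∑ i·c_i ≡ ∑ i·c'_i (mod N+1), and c and c' share a common subsequence of length N−1, then c = c'. -/
/-- The VT checksum of a binary sequence (positions are 1-based): ∑_{i=1}^{N} i·c_i. -/
def vtSum (c : List Bool) : ℕ :=
  ∑ i ∈ Finset.range c.length, (i + 1) * (c.getD i false).toNat

/-- Auxiliary: number of ones in a binary sequence. -/
def ones : List Bool → ℕ
  | [] => 0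
  | a :: l => a.toNat + ones l

lemma ones_append (l₁ l₂ : List Bool) : ones (l₁ ++ l₂) = ones l₁ + ones l₂ := by
  induction l₁ with
  | nil => simp [ones]
  | cons a l ih => simp only [List.cons_append, ones, List.append_eq, ih]; omega

lemma ones_le_length (l : List Bool) : ones l ≤ l.length := by
  induction l with
  | nil => simp [ones]
  | cons a l ih => cases a <;> simp only [ones, Bool.toNat, List.length_cons] <;> simp <;> omega

lemma eq_replicate_false (l : List Bool) (h : ones l = 0) :
    l = List.replicate l.length false := by
  induction l with
  | nil => rfl
  | cons a l ih =>
    cases a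
    · simp only [ones, Bool.toNat_false, Nat.zero_add] at h
      rw [List.length_cons, List.replicate_succ, ← ih h]
    · simp [ones] at h

lemma eq_replicate_true (l : List Bool) (h : ones l = l.length) :
    l = List.replicate l.length true := by
  induction l with
  | nil => rfl
  | cons a l ih =>
    cases a
    · simp only [ones, Bool.toNat_false, Nat.zero_add, List.length_cons] at h
      have := ones_le_length l; omega
    · simp only [ones, Bool.toNat_true, List.length_cons] at h
      have h' : ones l = l.length := by omega
      rw [List.length_cons, List.replicate_succ, ← ih h']

lemma ones_eq_sum (l : List Bool) :
    ones l = ∑ i ∈ Finset.range l.length, (l.getD i false).toNat := by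
  induction l with
  | nil => simp [ones]
  | cons a l ih =>
    rw [List.length_cons, Finset.sum_range_succ']
    simp only [List.getD_cons_succ, List.getD_cons_zero, ones, ih]
    omega

lemma vtSum_cons (a : Bool) (l : List Bool) :
    vtSum (a :: l) = a.toNat + ones l + vtSum l := by
  unfold vtSum
  rw [List.length_cons, Finset.sum_range_succ']
  simp only [List.getD_cons_succ, List.getD_cons_zero]
  have h1 : ∑ i ∈ Finset.range l.length, (i + 1 + 1) * ((l.getD i false)).toNat
      = (∑ i ∈ Finset.range l.length, ((l.getD i false)).toNat)
        + ∑ i ∈ Finset.range l.length, (i + 1) * ((l.getD i false)).toNat := by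
    rw [← Finset.sum_add_distrib]
    apply Finset.sum_congr rfl
    intro i _; ring
  rw [h1, ← ones_eq_sum]
  omega

lemma ones_take_drop (d : List Bool) (k : ℕ) :
    ones (d.take k) + ones (d.drop k) = ones d := by
  rw [← ones_append, List.take_append_drop]

lemma vtSum_insert (d : List Bool) (k : ℕ) (b : Bool) (hk : k ≤ d.length) :
    vtSum (d.take k ++ b :: d.drop k)
      = vtSum d + ones (d.drop k) + (k + 1) * b.toNat := by
  induction d generalizing k with
  | nil =>
    have : k = 0 := by simpa using hk
    subst this
    simp [vtSum_cons, ones]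
    omega
  | cons x d ih =>
    cases k with
    | zero =>
      simp only [List.take_zero, List.drop_zero, List.nil_append, vtSum_cons]
      omega
    | succ k =>
      have hk' : k ≤ d.length := by simpa using hk
      simp only [List.take_succ_cons, List.drop_succ_cons, List.cons_append, vtSum_cons]
      rw [ih k hk']
      have h1 : ones (d.take k ++ b :: d.drop k) = ones d + b.toNat := by
        rw [ones_append]
        have h0 : ones (b :: d.drop k) = b.toNat + ones (d.drop k) := rfl
        rw [h0]
        have h2 := ones_take_drop d k
        omega
      rw [h1]
      cases b <;> simp <;> omega

lemma exists_insert {d c : List Bool} (h : d.Sublist c) (hl : c.length = d.length + 1) :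
    ∃ k b, k ≤ d.length ∧ c = d.take k ++ b :: d.drop k := by
  induction h with
  | slnil => simp at hl
  | @cons l₁ l₂ a h ih =>
    refine ⟨0, a, Nat.zero_le _, ?_⟩
    have : l₁ = l₂ := h.eq_of_length (by simp at hl; omega)
    simp [this]
  | @cons_cons l₁ l₂ a h ih =>
    obtain ⟨k, b, hk, heq⟩ := ih (by simpa using hl)
    exact ⟨k + 1, b, by simpa using hk, by simp [heq]⟩

lemma drop_split (d : List Bool) (k m : ℕ) :
    d.drop k = (d.drop k).take m ++ d.drop (k + m) := by
  conv_lhs => rw [← List.take_append_drop m (d.drop k)]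
  rw [List.drop_drop, Nat.add_comm]

lemma insert_run (d : List Bool) (k m : ℕ) (b : Bool)
    (hmid : (d.drop k).take m = List.replicate m b) :
    d.take k ++ b :: d.drop k = d.take (k + m) ++ b :: d.drop (k + m) := by
  have hdk : d.drop k = List.replicate m b ++ d.drop (k + m) := by
    conv_lhs => rw [drop_split d k m]
    rw [hmid]
  rw [List.take_add, hmid, hdk]
  simp only [List.cons_append, List.append_assoc]
  congr 1
  rw [← List.cons_append, ← List.replicate_succ, List.replicate_succ', List.append_assoc]
  simp

lemma run_false (d : List Bool) (k k' : ℕ) (hkk : k ≤ k') (hk' : k' ≤ d.length)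
    (h : ones (d.drop k) = ones (d.drop k')) :
    d.take k ++ false :: d.drop k = d.take k' ++ false :: d.drop k' := by
  obtain ⟨m, rfl⟩ : ∃ m, k' = k + m := ⟨k' - k, by omega⟩
  apply insert_run
  have hsplit : ones (d.drop k) = ones ((d.drop k).take m) + ones (d.drop (k + m)) := by
    conv_lhs => rw [drop_split d k m]
    rw [ones_append]
  have hz : ones ((d.drop k).take m) = 0 := by omega
  have hlen : ((d.drop k).take m).length = m := by
    rw [List.length_take, List.length_drop]
    omega
  rw [eq_replicate_false _ hz, hlen]

lemma run_true (d : List Bool) (k k' : ℕ) (hkk : k ≤ k') (hk' : k' ≤ d.length)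
    (h : ones (d.drop k) + k = ones (d.drop k') + k') :
    d.take k ++ true :: d.drop k = d.take k' ++ true :: d.drop k' := by
  obtain ⟨m, rfl⟩ : ∃ m, k' = k + m := ⟨k' - k, by omega⟩
  apply insert_run
  have hsplit : ones (d.drop k) = ones ((d.drop k).take m) + ones (d.drop (k + m)) := by
    conv_lhs => rw [drop_split d k m]
    rw [ones_append]
  have hlen : ((d.drop k).take m).length = m := by
    rw [List.length_take, List.length_drop]
    omega
  have ho : ones ((d.drop k).take m) = ((d.drop k).take m).length := by omega
  rw [eq_replicate_true _ ho, hlen]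

/-- The Varshamov-Tenengolts code corrects a single deletion: if `c` and `c'` are binary
sequences of length `N` with equal VT checksums mod `N+1`, and they share a common
subsequence of length `N-1`, then `c = c'`. -/
theorem vt_single_deletion (N : ℕ) (c c' : List Bool)
    (hc : c.length = N) (hc' : c'.length = N)
    (hsum : vtSum c % (N + 1) = vtSum c' % (N + 1))
    (hsub : ∃ d : List Bool, d.length = N - 1 ∧ d.Sublist c ∧ d.Sublist c') :
    c = c' := by
  obtain ⟨d, hd, hdc, hdc'⟩ := hsub
  rcases Nat.eq_zero_or_pos N with hN | hN
  · subst hN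
    rw [List.length_eq_zero_iff] at hc hc'
    rw [hc, hc']
  · have hdlen : d.length = N - 1 := hd
    have hclen : c.length = d.length + 1 := by omega
    have hclen' : c'.length = d.length + 1 := by omega
    obtain ⟨k, b, hk, rfl⟩ := exists_insert hdc hclen
    obtain ⟨k', b', hk', rfl⟩ := exists_insert hdc' hclen'
    rw [vtSum_insert d k b hk, vtSum_insert d k' b' hk'] at hsum
    -- Bounds on the increments
    have hOk : ones (d.drop k) ≤ d.length - k := by
      have := ones_le_length (d.drop k)
      rwa [List.length_drop] at this
    have hOk' : ones (d.drop k') ≤ d.length - k' := by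
      have := ones_le_length (d.drop k')
      rwa [List.length_drop] at this
    have hs : ones (d.drop k) + (k + 1) * b.toNat < N + 1 := by
      cases b <;> simp <;> omega
    have hs' : ones (d.drop k') + (k' + 1) * b'.toNat < N + 1 := by
      cases b' <;> simp <;> omega
    have hmod : (ones (d.drop k) + (k + 1) * b.toNat)
        ≡ (ones (d.drop k') + (k' + 1) * b'.toNat) [MOD N + 1] := by
      have h0 : vtSum d + ones (d.drop k) + (k + 1) * b.toNat
          ≡ vtSum d + ones (d.drop k') + (k' + 1) * b'.toNat [MOD N + 1] := hsum
      have h1 : vtSum d + (ones (d.drop k) + (k + 1) * b.toNat)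
          ≡ vtSum d + (ones (d.drop k') + (k' + 1) * b'.toNat) [MOD N + 1] := by
        rw [← Nat.add_assoc, ← Nat.add_assoc]; exact h0
      exact Nat.ModEq.add_left_cancel' _ h1
    have heq : ones (d.drop k) + (k + 1) * b.toNat
        = ones (d.drop k') + (k' + 1) * b'.toNat :=
      Nat.ModEq.eq_of_lt_of_lt hmod hs hs'
    -- splits for mixed-case contradiction
    have hsplitk := ones_take_drop d k
    have hsplitk' := ones_take_drop d k'
    have htk : ones (d.take k) ≤ k := by
      have := ones_le_length (d.take k)
      have h2 : (d.take k).length ≤ k := by simp [List.length_take]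
      omega
    have htk' : ones (d.take k') ≤ k' := by
      have := ones_le_length (d.take k')
      have h2 : (d.take k').length ≤ k' := by simp [List.length_take]
      omega
    cases b <;> cases b' <;> simp only [Bool.toNat_false, Bool.toNat_true,
      Nat.mul_zero, Nat.mul_one, Nat.add_zero] at heq
    · -- false, false
      rcases le_total k k' with hkk | hkk
      · exact run_false d k k' hkk hk' heq
      · exact (run_false d k' k hkk hk heq.symm).symm
    · -- false, true : contradiction
      omega
    · -- true, false : contradiction
      omega
    · -- true, true
      rcases le_total k k' with hkk | hkk
      · exact run_true d k k' hkk hk' (by omega)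
      · exact (run_true d k' k hkk hk (by omega)).symm
end

section
/- Let 0 = p_0 < p_1 ≤ ... ≤ p_Q = n be integers and let s : {1,...,n} → ℤ be such that on each interval (p_{j-1}, p_j] the values s_i all have the same sign (all ≥ 0 or all ≤ 0), and each interval (p_{j-1}, p_j] contains at least one index i with s_i ≠ 0. Define the Q×Q matrix B with entries B_{e,j} = ∑_{i=p_{j-1}+1}^{p_j} |s_i| · i^{e-1} for e,j ∈ {1,...,Q}. Then det(B) > 0. -/
/-!
Expanding every column of `B` by multilinearity writes `det B` as a sum, over all choices of one
index `r j` in each interval, of `∏ j, |s (r j)|` times the Vandermonde determinant of the nodes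
`r j`. Since the intervals are disjoint and ordered, these nodes increase strictly, so every
Vandermonde determinant is positive; choosing each `r j` with `s (r j) ≠ 0` gives a positive summand.
-/

namespace Matrix

theorem det_of_sum_cols {R n α : Type*} [CommRing R] [Fintype n] [DecidableEq n]
    (A : n → Finset α) (f : n → α → n → R) :
    (of fun e j => ∑ a ∈ A j, f j a e).det =
      ∑ r ∈ Fintype.piFinset A, (of fun e j => f j (r j) e).det := by
  have hcols : (of fun e j => ∑ a ∈ A j, f j a e)ᵀ = fun j => ∑ a ∈ A j, f j a := by
    ext j e
    simp [Finset.sum_apply]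
  rw [← det_transpose, hcols]
  exact (detRowAlternating.toMultilinearMap.map_sum_finset f A).trans
    (Finset.sum_congr rfl fun r _ => det_transpose (of fun e j => f j (r j) e))

theorem det_weighted_vandermonde_transpose {R : Type*} [CommRing R] {n : ℕ} (w v : Fin n → R) :
    (of fun e j : Fin n => w j * v j ^ (e : ℕ)).det = (∏ j, w j) * (vandermonde v).det := by
  rw [← det_transpose (vandermonde v), ← det_mul_row]
  rfl

section LinearOrderedRing

variable {R : Type*} [CommRing R] [LinearOrder R] [IsStrictOrderedRing R]

theorem det_vandermonde_pos {n : ℕ} {v : Fin n → R} (hv : StrictMono v) :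
    0 < (vandermonde v).det := by
  rw [det_vandermonde]
  exact Finset.prod_pos fun i _ => Finset.prod_pos fun j hj => sub_pos.2 (hv (Finset.mem_Ioi.1 hj))

theorem det_moment_pos {α : Type*} {n : ℕ} (A : Fin n → Finset α) (w x : α → R)
    (hw : ∀ j, ∀ a ∈ A j, 0 ≤ w a)
    (hx : ∀ j k, j < k → ∀ a ∈ A j, ∀ b ∈ A k, x a < x b)
    (hpos : ∀ j, ∃ a ∈ A j, 0 < w a) :
    0 < (of fun e j : Fin n => ∑ a ∈ A j, w a * x a ^ (e : ℕ)).det := by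
  have hnodes : ∀ r ∈ Fintype.piFinset A, StrictMono fun j => x (r j) := fun r hr j k hjk =>
    hx j k hjk _ (Fintype.mem_piFinset.1 hr j) _ (Fintype.mem_piFinset.1 hr k)
  rw [det_of_sum_cols A fun _ a e => w a * x a ^ (e : ℕ)]
  simp only [det_weighted_vandermonde_transpose]
  choose r hrA hrw using hpos
  refine Finset.sum_pos' (fun t ht => ?_) ⟨r, Fintype.mem_piFinset.2 hrA, ?_⟩
  · exact mul_nonneg (Finset.prod_nonneg fun j _ => hw j _ (Fintype.mem_piFinset.1 ht j))
      (det_vandermonde_pos (hnodes t ht)).le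
  · exact mul_pos (Finset.prod_pos fun j _ => hrw j)
      (det_vandermonde_pos (hnodes r (Fintype.mem_piFinset.2 hrA)))

end LinearOrderedRing

end Matrix

theorem moment_matrix_det_pos_general (Q : ℕ) (p : Fin (Q + 1) → ℕ) (s : ℕ → ℤ)
    (hmono : Monotone p)
    (hnz : ∀ j : Fin Q, ∃ i, p j.castSucc < i ∧ i ≤ p j.succ ∧ s i ≠ 0) :
    0 < (Matrix.of fun e j : Fin Q =>
        ∑ i ∈ Finset.Ioc (p j.castSucc) (p j.succ), |s i| * (i : ℤ) ^ (e : ℕ)).det := by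
  have hordered : ∀ j k : Fin Q, j < k → ∀ a ∈ Finset.Ioc (p j.castSucc) (p j.succ),
      ∀ b ∈ Finset.Ioc (p k.castSucc) (p k.succ), (a : ℤ) < b := by
    intro j k hjk a ha b hb
    have hgap : p j.succ ≤ p k.castSucc := hmono (Fin.succ_le_castSucc_iff.2 hjk)
    rw [Finset.mem_Ioc] at ha hb
    omega
  refine Matrix.det_moment_pos _ (fun i => |s i|) (fun i => (i : ℤ))
    (fun _ _ _ => abs_nonneg _) hordered fun j => ?_
  obtain ⟨i, hlo, hhi, hs⟩ := hnz j
  exact ⟨i, Finset.mem_Ioc.2 ⟨hlo, hhi⟩, abs_pos.2 hs⟩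

/-- The generalized Vandermonde-type moment matrix with nonnegative weights `|s i|` supported
on disjoint consecutive integer intervals `(p_{j-1}, p_j]`, with at least one nonzero weight
per interval and sign-constant `s` on each interval, has positive determinant. -/
theorem moment_matrix_det_pos (Q n : ℕ) (p : Fin (Q + 1) → ℕ) (s : ℕ → ℤ)
    (hp0 : p 0 = 0) (hpn : p (Fin.last Q) = n) (hmono : Monotone p)
    (hsign : ∀ j : Fin Q,
      (∀ i, p j.castSucc < i → i ≤ p j.succ → 0 ≤ s i) ∨
      (∀ i, p j.castSucc < i → i ≤ p j.succ → s i ≤ 0))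
    (hnz : ∀ j : Fin Q, ∃ i, p j.castSucc < i ∧ i ≤ p j.succ ∧ s i ≠ 0) :
    0 < (Matrix.of fun e j : Fin Q =>
        ∑ i ∈ Finset.Ioc (p j.castSucc) (p j.succ), |s i| * (i : ℤ) ^ (e : ℕ)).det :=
  moment_matrix_det_pos_general Q p s hmono hnz
end

section
/- Let 0 = p_0 < p_1 ≤ ... ≤ p_Q = n, let s : {1,...,n} → ℤ be sign-constant on each interval (p_{j-1}, p_j], and suppose x ∈ {−1,1}^Q satisfies ∑_{j=1}^{Q} x_j · (∑_{i=p_{j-1}+1}^{p_j} |s_i| i^e) = 0 for all e ∈ {0,...,Q−1}. Then s_i = 0 for all i ∈ {1,...,n}. -/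
/-!
The sign vector `x` is realised, block by block, by a polynomial `G` of degree `< Q`: put a root
at `p_k + 1/2` whenever `x_{k-1} ≠ x_k`, so that `x_j G(i) > 0` for every `i` in the `j`-th block.
The vanishing moments make `∑_j x_j ∑_i |s_i| G(i)` a combination of zero moments, hence zero,
while every summand `|s_i| (x_j G(i))` is nonnegative; so every `|s_i|` vanishes.
-/

open Finset Polynomial

theorem Fin.exists_castSucc_lt_and_le_succ {α : Type*} [LinearOrder α] {n : ℕ}
    (f : Fin (n + 1) → α) {a : α} (h0 : f 0 < a) (hlast : a ≤ f (Fin.last n)) :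
    ∃ j : Fin n, f j.castSucc < a ∧ a ≤ f j.succ := by
  induction n with
  | zero => exact absurd hlast (not_le.2 h0)
  | succ n ih =>
    by_cases h1 : a ≤ f 1
    · exact ⟨0, h0, h1⟩
    · obtain ⟨j, hj⟩ := ih (f ∘ Fin.succ) (not_le.1 h1) hlast
      exact ⟨j.succ, hj⟩

theorem Polynomial.sum_mul_eval_eq_zero {R ι : Type*} [CommRing R] {S : Finset ι}
    {w t : ι → R} {G : R[X]} {Q : ℕ} (hG : G.natDegree < Q)
    (hmom : ∀ e < Q, ∑ a ∈ S, w a * t a ^ e = 0) :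
    ∑ a ∈ S, w a * G.eval (t a) = 0 := by
  simp_rw [eval_eq_sum_range' hG, mul_sum]
  rw [sum_comm]
  refine sum_eq_zero fun e he => ?_
  calc ∑ a ∈ S, w a * (G.coeff e * t a ^ e) = G.coeff e * ∑ a ∈ S, w a * t a ^ e := by
        rw [mul_sum]; exact sum_congr rfl fun a _ => mul_left_comm _ _ _
    _ = 0 := by rw [hmom e (mem_range.1 he), mul_zero]

theorem Polynomial.exists_natDegree_le_sign_pattern_nat {p : ℕ → ℕ} (hp : Monotone p) {x : ℕ → ℤ}
    (hx : ∀ k, x k = 1 ∨ x k = -1) (m : ℕ) :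
    ∃ G : ℤ[X], G.natDegree ≤ m ∧
      -- the last block `(p m, ∞)` is unbounded, which is what lets the induction add a block
      ∀ j ≤ m, ∀ i : ℕ, p j < i → (j < m → i ≤ p (j + 1)) → 0 < x j * G.eval (i : ℤ) := by
  induction m with
  | zero =>
    refine ⟨C (x 0), by simp, fun j hj i _ _ => ?_⟩
    obtain rfl : j = 0 := by omega
    rcases hx 0 with h | h <;> simp [h]
  | succ m ih =>
    obtain ⟨G, hdeg, hG⟩ := ih
    have hlast : ∀ i : ℕ, p (m + 1) < i → 0 < x m * G.eval (i : ℤ) := fun i hi =>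
      hG m le_rfl i ((hp m.le_succ).trans_lt hi) (absurd · (lt_irrefl m))
    have hstep : x (m + 1) = x m ∨ x (m + 1) = -x m := by
      rcases hx m with h | h <;> rcases hx (m + 1) with h' | h' <;> simp [h, h']
    rcases hstep with hsame | hflip
    · refine ⟨G, hdeg.trans m.le_succ, fun j hj i hji hij => ?_⟩
      rcases hj.lt_or_eq with hj | rfl
      · exact hG j (by omega) i hji fun _ => hij hj
      · rw [hsame]; exact hlast i hji
    · -- the new factor has its root at `p (m + 1) + 1/2`
      refine ⟨G * (C (-2) * X + C (2 * (p (m + 1) : ℤ) + 1)),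
        natDegree_mul_le.trans (add_le_add hdeg natDegree_linear_le), fun j hj i hji hij => ?_⟩
      simp only [eval_mul, eval_add, eval_C, eval_X]
      rcases hj.lt_or_eq with hj | rfl
      · have hi : i ≤ p (m + 1) := (hij hj).trans (hp (by omega))
        have := hG j (by omega) i hji fun _ => hij hj
        have : (i : ℤ) ≤ p (m + 1) := by exact_mod_cast hi
        nlinarith
      · have := hlast i hji
        have : (p (m + 1) : ℤ) < i := by exact_mod_cast hji
        rw [hflip]
        nlinarith

theorem Polynomial.exists_natDegree_le_sign_pattern {m : ℕ} {p : Fin (m + 2) → ℕ} (hp : Monotone p)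
    {x : Fin (m + 1) → ℤ} (hx : ∀ j, x j = 1 ∨ x j = -1) :
    ∃ G : ℤ[X], G.natDegree ≤ m ∧
      ∀ j : Fin (m + 1), ∀ i ∈ Ioc (p j.castSucc) (p j.succ), 0 < x j * G.eval (i : ℤ) := by
  obtain ⟨G, hdeg, hG⟩ := exists_natDegree_le_sign_pattern_nat (hp.comp Fin.clamp_monotone)
    (x := fun k => x (Fin.clamp k m)) (fun _ => hx _) m
  refine ⟨G, hdeg, fun j i hi => ?_⟩
  have hcast : Fin.clamp j (m + 1) = j.castSucc := Fin.ext (by simp)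
  have hsucc : Fin.clamp (j + 1) (m + 1) = j.succ := Fin.ext (by simp; omega)
  have hj : Fin.clamp j m = j := Fin.ext (by simp; omega)
  rw [mem_Ioc] at hi
  simpa [hcast, hsucc, hj] using hG j j.is_le i (by simpa [hcast] using hi.1)
    fun _ => by simpa [hsucc] using hi.2

theorem vanishing_moments_general (Q n : ℕ) (p : Fin (Q + 1) → ℕ) (s : ℕ → ℤ) (x : Fin Q → ℤ)
    (hp0 : p 0 = 0) (hpn : p (Fin.last Q) = n) (hmono : Monotone p)
    (hx : ∀ j, x j = 1 ∨ x j = -1)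
    (hmom : ∀ e : Fin Q,
      ∑ j : Fin Q, x j * ∑ i ∈ Finset.Ioc (p j.castSucc) (p j.succ),
        |s i| * (i : ℤ) ^ (e : ℕ) = 0) :
    ∀ i, 1 ≤ i → i ≤ n → s i = 0 := by
  intro i hi1 hin
  obtain _ | m := Q
  · exact absurd (hpn.symm.trans hp0) (by omega)
  obtain ⟨G, hdeg, hG⟩ := Polynomial.exists_natDegree_le_sign_pattern hmono hx
  set S := univ.sigma fun j : Fin (m + 1) => Ioc (p j.castSucc) (p j.succ)
  have hmomS : ∀ e < m + 1, ∑ a ∈ S, |s a.2| * x a.1 * (a.2 : ℤ) ^ e = 0 := fun e he => by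
    simpa [S, sum_sigma, mul_sum, mul_left_comm, mul_comm, mul_assoc] using hmom ⟨e, he⟩
  have hnonneg : ∀ a ∈ S, 0 ≤ |s a.2| * x a.1 * G.eval (a.2 : ℤ) := fun a ha => by
    rw [mul_assoc]
    exact mul_nonneg (abs_nonneg _) (hG a.1 a.2 (mem_sigma.1 ha).2).le
  have hzero := (sum_eq_zero_iff_of_nonneg hnonneg).1
    (sum_mul_eval_eq_zero (Nat.lt_succ_of_le hdeg) hmomS)
  obtain ⟨j, hj⟩ := Fin.exists_castSucc_lt_and_le_succ p (a := i) (by omega) (by omega)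
  have hi : i ∈ Ioc (p j.castSucc) (p j.succ) := mem_Ioc.2 hj
  have hsi := hzero ⟨j, i⟩ (mem_sigma.2 ⟨mem_univ _, hi⟩)
  rw [mul_assoc, mul_eq_zero] at hsi
  exact abs_eq_zero.1 (hsi.resolve_right (hG j i hi).ne')

/-- If all power-sum moments up to order `Q-1` of the signed measure with weights `x_j |s_i|`
vanish, where `x ∈ {-1,1}^Q` and `s` is sign-constant on each interval `(p_{j-1}, p_j]`,
then `s` vanishes on `[1, n]`. -/
theorem vanishing_moments (Q n : ℕ) (p : Fin (Q + 1) → ℕ) (s : ℕ → ℤ) (x : Fin Q → ℤ)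
    (hp0 : p 0 = 0) (hpn : p (Fin.last Q) = n) (hmono : Monotone p)
    (hsign : ∀ j : Fin Q,
      (∀ i, p j.castSucc < i → i ≤ p j.succ → 0 ≤ s i) ∨
      (∀ i, p j.castSucc < i → i ≤ p j.succ → s i ≤ 0))
    (hx : ∀ j, x j = 1 ∨ x j = -1)
    (hmom : ∀ e : Fin Q,
      ∑ j : Fin Q, x j * ∑ i ∈ Finset.Ioc (p j.castSucc) (p j.succ),
        |s i| * (i : ℤ) ^ (e : ℕ) = 0) :
    ∀ i, 1 ≤ i → i ≤ n → s i = 0 :=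
  vanishing_moments_general Q n p s x hp0 hpn hmono hx hmom
end

section
/- Let c, c' ∈ {0,1}^n be sequences in which any two distinct indices of 1-entries differ by at least 3k (i.e., the 0-runs have length at least 3k−1). Let m^{(e)} be the integer vector with i-th entry ∑_{j=1}^{i} j^e. If c' ∈ B_{3k}(c) and c · m^{(e)} = c' · m^{(e)} for all e ∈ {0,1,...,6k}, then c = c'. -/
/-- `c · m^{(e)}` where `m^{(e)}_i = ∑_{j=1}^{i} j^e` (positions are 1-based). -/
def dotM (c : List Bool) (e : ℕ) : ℕ :=
  ∑ i ∈ Finset.range c.length, (c.getD i false).toNat * ∑ j ∈ Finset.Icc 1 (i + 1), j ^ e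

open Finset Polynomial


private lemma pos_of_mul_sq {a b : ℤ} (h : 0 < a * b ^ 2) : 0 < a := by
  by_contra hx
  push_neg at hx
  nlinarith [sq_nonneg b]

theorem sign_vanish {N D : ℕ} {w : ℕ → ℤ}
    (hm : ∀ e ≤ D, ∑ x ∈ range N, (x + 1 : ℤ) ^ e * w x = 0)
    (hch : ∀ f : ℕ → ℕ, (∀ i ≤ D, f i < f (i + 1)) → (∀ i ≤ D + 1, f i < N) →
      (∀ i ≤ D + 1, w (f i) ≠ 0) → ∃ i ≤ D, 0 ≤ w (f i) * w (f (i + 1))) :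
    ∀ x < N, w x = 0 := by
  by_contra hcon
  push_neg at hcon
  obtain ⟨x₀, hx₀N, hx₀⟩ := hcon
  set T : Finset ℕ := (range N).filter (fun m => w m ≠ 0) with hTdef
  have hTmem : ∀ {m : ℕ}, m ∈ T ↔ m < N ∧ w m ≠ 0 := by
    intro m; simp [hTdef]
  have hT : T.Nonempty := ⟨x₀, hTmem.mpr ⟨hx₀N, hx₀⟩⟩
  set F : Finset ℕ := T.filter
    (fun m => ∃ p ∈ T, p < m ∧ (∀ r ∈ T, ¬(p < r ∧ r < m)) ∧ w p * w m < 0) with hFdef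
  have hFT : F ⊆ T := filter_subset _ _
  have KS : ∀ m' ∈ T, ∀ m ∈ T, m < m' →
      0 < w m * w m' * (-1 : ℤ) ^ ((F.filter (fun b => m < b ∧ b ≤ m')).card) := by
    intro m'
    induction m' using Nat.strong_induction_on with
    | _ m' IH =>
      intro hm'T m hmT hlt
      have hne : (T.filter (· < m')).Nonempty := ⟨m, by simp [mem_filter, hmT, hlt]⟩
      set p := (T.filter (· < m')).max' hne with hpdef
      have hpmem := (T.filter (· < m')).max'_mem hne
      rw [mem_filter] at hpmem
      obtain ⟨hpT, hplt⟩ := hpmem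
      have hmax : ∀ r ∈ T, r < m' → r ≤ p := fun r hr hrlt =>
        le_max' _ r (by rw [mem_filter]; exact ⟨hr, hrlt⟩)
      have hFiff : m' ∈ F ↔ w p * w m' < 0 := by
        constructor
        · intro hmF
          rw [hFdef, mem_filter] at hmF
          obtain ⟨-, p', hp'T, hp'lt, hgap, hneg⟩ := hmF
          rcases eq_or_lt_of_le (hmax p' hp'T hp'lt) with h | h
          · rwa [← h]
          · exact absurd ⟨h, hplt⟩ (hgap p hpT)
        · intro hneg
          rw [hFdef, mem_filter]
          exact ⟨hm'T, p, hpT, hplt,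
            fun r hr hc => absurd (hmax r hr hc.2) (not_le.mpr hc.1), hneg⟩
      have hTm' : w m' ≠ 0 := (hTmem.mp hm'T).2
      have hTp : w p ≠ 0 := (hTmem.mp hpT).2
      have hsub : F.filter (fun b => m < b ∧ b ≤ m')
          = (F.filter (fun b => m < b ∧ b ≤ p)) ∪ (F ∩ {m'}) := by
        ext b
        simp only [mem_filter, mem_union, mem_inter, mem_singleton]
        constructor
        · rintro ⟨hbF, hmb, hbm'⟩
          rcases eq_or_lt_of_le hbm' with h | h
          · exact Or.inr ⟨hbF, h⟩
          · exact Or.inl ⟨hbF, hmb, hmax b (hFT hbF) h⟩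
        · rintro (⟨hbF, hmb, hbp⟩ | ⟨hbF, rfl⟩)
          · exact ⟨hbF, hmb, le_trans hbp (le_of_lt hplt)⟩
          · exact ⟨hbF, hlt, le_refl _⟩
      have hdisj : Disjoint (F.filter (fun b => m < b ∧ b ≤ p)) (F ∩ {m'}) := by
        rw [disjoint_left]
        rintro b hb hb2
        rw [mem_filter] at hb
        rw [mem_inter, mem_singleton] at hb2
        omega
      have hcard : (F.filter (fun b => m < b ∧ b ≤ m')).card
          = (F.filter (fun b => m < b ∧ b ≤ p)).card + (if m' ∈ F then 1 else 0) := by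
        rw [hsub, card_union_of_disjoint hdisj]
        congr 1
        by_cases hF : m' ∈ F
        · rw [if_pos hF]
          rw [inter_comm, singleton_inter_of_mem hF, card_singleton]
        · rw [if_neg hF]
          rw [inter_comm, singleton_inter_of_notMem hF, card_empty]
      have h2 : 0 < w p * w m' * (-1 : ℤ) ^ (if m' ∈ F then 1 else 0) := by
        by_cases hneg : w p * w m' < 0
        · rw [if_pos (hFiff.mpr hneg), pow_one]
          nlinarith
        · push_neg at hneg
          have hne0 : w p * w m' ≠ 0 := mul_ne_zero hTp hTm'
          rw [if_neg (fun h => absurd (hFiff.mp h) (not_lt.mpr hneg)), pow_zero, mul_one]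
          exact lt_of_le_of_ne hneg (Ne.symm hne0)
      rcases eq_or_lt_of_le (hmax m hmT hlt) with heq | hmp
      · have hzero : (F.filter (fun b => m < b ∧ b ≤ p)).card = 0 := by
          rw [card_eq_zero, filter_eq_empty_iff]
          rintro b hb ⟨h1, h2⟩
          omega
        rw [hcard, hzero, zero_add]
        rw [← heq] at h2
        exact h2
      · have h1 := IH p hplt hpT m hmT hmp
        rw [hcard, pow_add]
        apply pos_of_mul_sq (b := w p)
        rw [show (w m * w m' * ((-1 : ℤ) ^ ((F.filter (fun b => m < b ∧ b ≤ p)).card) *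
            (-1 : ℤ) ^ (if m' ∈ F then 1 else 0))) * (w p) ^ 2
            = (w m * w p * (-1 : ℤ) ^ ((F.filter (fun b => m < b ∧ b ≤ p)).card)) *
              (w p * w m' * (-1 : ℤ) ^ (if m' ∈ F then 1 else 0)) from by ring]
        exact mul_pos h1 h2
  set t0 := T.min' hT with ht0def
  have ht0T : t0 ∈ T := T.min'_mem hT
  have hFgt : ∀ b ∈ F, t0 < b := by
    intro b hb
    rw [hFdef, mem_filter] at hb
    obtain ⟨-, p, hpT, hplt, -, -⟩ := hb
    exact lt_of_le_of_lt (T.min'_le p hpT) hplt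
  have hFcard : F.card ≤ D := by
    by_contra hcc
    push_neg at hcc
    set l := F.sort (· ≤ ·) with hldef
    have hlen : l.length = F.card := F.length_sort _
    have hsorted : l.SortedLT := F.sortedLT_sort
    have hmemF : ∀ {b : ℕ}, b ∈ l ↔ b ∈ F := by intro b; simp [hldef]
    have hmono := hsorted.strictMono_get
    have h0 : 0 < l.length := by omega
    set b₁ := l.get ⟨0, h0⟩ with hb₁def
    have hb₁F : b₁ ∈ F := hmemF.mp (l.get_mem _)
    have hb₁w := hb₁F
    rw [hFdef, mem_filter] at hb₁w
    obtain ⟨hb₁T, p₀, hp₀T, hp₀lt, hp₀gap, hp₀neg⟩ := hb₁w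
    set f : ℕ → ℕ := fun i => if h : i - 1 < l.length ∧ 1 ≤ i then l.get ⟨i - 1, h.1⟩ else p₀
      with hfdef
    have hf0 : f 0 = p₀ := by simp [hfdef]
    have hfval : ∀ i (h1 : 1 ≤ i) (h2 : i - 1 < l.length), f i = l.get ⟨i - 1, h2⟩ := by
      intro i h1 h2
      rw [hfdef]
      exact dif_pos ⟨h2, h1⟩
    have hfv : ∀ i, 1 ≤ i → i - 1 < l.length → f i ∈ F := by
      intro i h1 h2
      rw [hfval i h1 h2]
      exact hmemF.mp (l.get_mem _)
    have hfT : ∀ i ≤ D + 1, f i ∈ T := by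
      intro i hi
      rcases Nat.eq_zero_or_pos i with rfl | h1
      · rw [hf0]; exact hp₀T
      · exact hFT (hfv i h1 (by omega))
    have hfmono : ∀ i ≤ D, f i < f (i + 1) := by
      intro i hi
      rcases Nat.eq_zero_or_pos i with rfl | h1
      · rw [hf0]
        have : f 1 = b₁ := by simp [hfdef, hb₁def, h0]
        rw [this]; exact hp₀lt
      · have h2 : i - 1 < l.length := by omega
        have h3 : i < l.length := by omega
        have e1 : f i = l.get ⟨i - 1, h2⟩ := hfval i h1 h2
        have e2 : f (i + 1) = l.get ⟨i, h3⟩ := hfval (i + 1) (by omega) h3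
        rw [e1, e2]
        exact hmono (by simp [Fin.lt_def]; omega)
    have halt : ∀ i ≤ D, w (f i) * w (f (i + 1)) < 0 := by
      intro i hi
      rcases Nat.eq_zero_or_pos i with rfl | h1
      · have : f 1 = b₁ := by simp [hfdef, hb₁def, h0]
        rw [hf0, this]; exact hp₀neg
      · have h2 : i - 1 < l.length := by omega
        have h3 : i < l.length := by omega
        have e1 : f i = l.get ⟨i - 1, h2⟩ := hfval i h1 h2
        have e2 : f (i + 1) = l.get ⟨i, h3⟩ := hfval (i + 1) (by omega) h3
        have hmm' : f i < f (i + 1) := hfmono i hi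
        have hmF : f i ∈ F := hfv i h1 h2
        have hm'F : f (i + 1) ∈ F := hfv (i + 1) (by omega) (by omega)
        have hone : F.filter (fun b => f i < b ∧ b ≤ f (i + 1)) = {f (i + 1)} := by
          ext b
          simp only [mem_filter, mem_singleton]
          constructor
          · rintro ⟨hbF, hlb, hub⟩
            obtain ⟨j, hj⟩ := List.mem_iff_get.mp (hmemF.mpr hbF)
            have hij1 : (⟨i - 1, h2⟩ : Fin l.length) < j := by
              by_contra hle
              push_neg at hle
              have := hmono.monotone hle
              rw [hj, ← e1] at this
              omega
            have hij2 : ¬ ((⟨i, h3⟩ : Fin l.length) < j) := by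
              intro hgt
              have := hmono hgt
              rw [hj, ← e2] at this
              omega
            have : j = (⟨i, h3⟩ : Fin l.length) := by
              apply Fin.ext
              simp only [Fin.lt_def, Fin.val_mk] at hij1 hij2
              simp only [Fin.val_mk]
              omega
            rw [← hj, this, ← e2]
          · rintro rfl
            exact ⟨hm'F, hmm', le_refl _⟩
        have := KS (f (i + 1)) (hFT hm'F) (f i) (hFT hmF) hmm'
        rw [hone, card_singleton, pow_one] at this
        nlinarith
    obtain ⟨i, hi, hge⟩ := hch f hfmono
      (fun i hi => (hTmem.mp (hfT i hi)).1) (fun i hi => (hTmem.mp (hfT i hi)).2)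
    exact absurd (halt i hi) (not_lt.mpr hge)
  set σ : ℤ := if 0 < w t0 then 1 else -1 with hσdef
  have hwt0 : w t0 ≠ 0 := (hTmem.mp ht0T).2
  have hσ : 0 < σ * w t0 := by
    by_cases h : 0 < w t0
    · simp only [hσdef, if_pos h, one_mul]; exact h
    · have hneg : w t0 < 0 := lt_of_le_of_ne (not_lt.mp h) hwt0
      simp only [hσdef, if_neg h]; linarith
  set q : ℤ[X] := C ((-1 : ℤ) ^ F.card * σ) * ∏ b ∈ F, (C 2 * X - C (2 * (b : ℤ) + 1))
    with hqdef
  have hdeg : q.natDegree ≤ D := by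
    have h1 : (∏ b ∈ F, (C (2 : ℤ) * X - C (2 * (b : ℤ) + 1))).natDegree ≤ F.card := by
      refine le_trans (Polynomial.natDegree_prod_le _ _) ?_
      refine le_trans (Finset.sum_le_card_nsmul F _ 1 ?_) (by simp)
      intro b _
      refine le_trans (Polynomial.natDegree_sub_le _ _) ?_
      simp only [max_le_iff]
      constructor
      · exact le_trans (Polynomial.natDegree_C_mul_le _ _) (by simp)
      · exact le_trans (le_of_eq (Polynomial.natDegree_C _)) (by omega)
    exact le_trans (Polynomial.natDegree_C_mul_le _ _) (le_trans h1 hFcard)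
  have hqz : ∑ x ∈ range N, q.eval ((x : ℤ) + 1) * w x = 0 := by
    have hev : ∀ x : ℕ, q.eval ((x : ℤ) + 1)
        = ∑ e ∈ range (D + 1), q.coeff e * ((x : ℤ) + 1) ^ e := fun x =>
      Polynomial.eval_eq_sum_range' (lt_of_le_of_lt hdeg (Nat.lt_succ_self D)) _
    calc ∑ x ∈ range N, q.eval ((x : ℤ) + 1) * w x
        = ∑ x ∈ range N, ∑ e ∈ range (D + 1), q.coeff e * (((x : ℤ) + 1) ^ e * w x) := by
          refine sum_congr rfl fun x _ => ?_
          rw [hev x, sum_mul]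
          exact sum_congr rfl fun e _ => by ring
      _ = ∑ e ∈ range (D + 1), q.coeff e * ∑ x ∈ range N, (((x : ℤ) + 1) ^ e * w x) := by
          rw [Finset.sum_comm]
          exact sum_congr rfl fun e _ => by rw [mul_sum]
      _ = 0 := by
          refine sum_eq_zero fun e he => ?_
          rw [hm e (Nat.lt_succ_iff.mp (mem_range.mp he)), mul_zero]
  have hkey : ∀ x ∈ T, 0 < q.eval ((x : ℤ) + 1) * w x := by
    intro x hxT
    have hxw : w x ≠ 0 := (hTmem.mp hxT).2
    have hevalq : q.eval ((x : ℤ) + 1)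
        = (-1 : ℤ) ^ F.card * σ * ∏ b ∈ F, (2 * (x : ℤ) - 2 * b + 1) := by
      rw [hqdef]
      simp only [Polynomial.eval_mul, Polynomial.eval_C, Polynomial.eval_prod,
        Polynomial.eval_sub, Polynomial.eval_X]
      congr 1
      exact prod_congr rfl fun b _ => by ring
    have hsplit := prod_filter_mul_prod_filter_not F (· ≤ x) (fun b => 2 * (x : ℤ) - 2 * b + 1)
    set c₁ := (F.filter (· ≤ x)).card with hc₁def
    set c₂ := (F.filter (fun b => ¬ b ≤ x)).card with hc₂def
    have hcards : c₁ + c₂ = F.card := card_filter_add_card_filter_not _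
    have hP1 : 0 < ∏ b ∈ F.filter (· ≤ x), (2 * (x : ℤ) - 2 * b + 1) := by
      refine prod_pos fun b hb => ?_
      rw [mem_filter] at hb
      have : (b : ℤ) ≤ x := by exact_mod_cast hb.2
      linarith
    have hP2 : ∏ b ∈ F.filter (fun b => ¬ b ≤ x), (2 * (x : ℤ) - 2 * b + 1)
        = (-1 : ℤ) ^ c₂ * ∏ b ∈ F.filter (fun b => ¬ b ≤ x), (2 * (b : ℤ) - 2 * x - 1) := by
      rw [← prod_const (-1 : ℤ), ← prod_mul_distrib]
      exact prod_congr rfl fun b _ => by ring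
    have hP2' : 0 < ∏ b ∈ F.filter (fun b => ¬ b ≤ x), (2 * (b : ℤ) - 2 * x - 1) := by
      refine prod_pos fun b hb => ?_
      rw [mem_filter] at hb
      have : (x : ℤ) < b := by exact_mod_cast not_le.mp hb.2
      linarith
    have hsign : 0 < σ * (-1 : ℤ) ^ c₁ * w x := by
      rcases eq_or_lt_of_le (T.min'_le x hxT) with heq | hlt
      · have : F.filter (· ≤ x) = ∅ := by
          rw [filter_eq_empty_iff]
          intro b hb
          have h1 := hFgt b hb
          omega
        rw [hc₁def, this, card_empty, pow_zero, mul_one]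
        rw [ht0def] at hσ
        rw [← heq]
        exact hσ
      · have hks := KS x hxT t0 ht0T hlt
        have hceq : F.filter (fun b => t0 < b ∧ b ≤ x) = F.filter (· ≤ x) := by
          refine filter_congr fun b hb => ?_
          exact ⟨fun h => h.2, fun h => ⟨hFgt b hb, h⟩⟩
        rw [hceq, ← hc₁def] at hks
        apply pos_of_mul_sq (b := w t0)
        rw [show σ * (-1 : ℤ) ^ c₁ * w x * (w t0) ^ 2
            = (σ * w t0) * (w t0 * w x * (-1 : ℤ) ^ c₁) from by ring]
        exact mul_pos hσ hks
    rw [hevalq, ← hsplit, hP2]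
    rw [show (-1 : ℤ) ^ F.card = (-1 : ℤ) ^ c₁ * (-1 : ℤ) ^ c₂ from by rw [← pow_add, hcards]]
    rw [show (-1 : ℤ) ^ c₁ * (-1 : ℤ) ^ c₂ * σ *
        ((∏ b ∈ F.filter (· ≤ x), (2 * (x : ℤ) - 2 * b + 1)) *
          ((-1 : ℤ) ^ c₂ * ∏ b ∈ F.filter (fun b => ¬ b ≤ x), (2 * (b : ℤ) - 2 * x - 1))) * w x
        = (σ * (-1 : ℤ) ^ c₁ * w x) * (((-1 : ℤ) ^ c₂ * (-1 : ℤ) ^ c₂) *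
          ((∏ b ∈ F.filter (· ≤ x), (2 * (x : ℤ) - 2 * b + 1)) *
            ∏ b ∈ F.filter (fun b => ¬ b ≤ x), (2 * (b : ℤ) - 2 * x - 1))) from by ring]
    have hsq : (0 : ℤ) < (-1 : ℤ) ^ c₂ * (-1 : ℤ) ^ c₂ := by
      rw [show (-1 : ℤ) ^ c₂ * (-1 : ℤ) ^ c₂ = ((-1 : ℤ) ^ c₂) ^ 2 from by ring]
      positivity
    exact mul_pos hsign (mul_pos hsq (mul_pos hP1 hP2'))
  have hsum : 0 < ∑ x ∈ range N, q.eval ((x : ℤ) + 1) * w x := by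
    refine sum_pos' (fun x hx => ?_) ⟨x₀, mem_range.mpr hx₀N, hkey x₀ (hTmem.mpr ⟨hx₀N, hx₀⟩)⟩
    by_cases hwx : w x = 0
    · rw [hwx, mul_zero]
    · exact le_of_lt (hkey x (hTmem.mpr ⟨mem_range.mp hx, hwx⟩))
  rw [hqz] at hsum
  exact lt_irrefl 0 hsum


/-- The potential function used in the chain-counting argument. -/
def PsiFn (φ ψ : ℕ → ℕ) (Q Uc Uc' : Finset ℕ) (x : ℕ) : ℕ :=
  if h : (Q.filter (fun q => min (φ q) (ψ q) < x)).Nonempty then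
    (φ ((Q.filter (fun q => min (φ q) (ψ q) < x)).max' h)
        - (Q.filter (fun q => min (φ q) (ψ q) < x)).max' h)
      + (ψ ((Q.filter (fun q => min (φ q) (ψ q) < x)).max' h)
        - (Q.filter (fun q => min (φ q) (ψ q) < x)).max' h)
      + (Uc.filter (fun z =>
          φ ((Q.filter (fun q => min (φ q) (ψ q) < x)).max' h) < z ∧ z < x)).card
      + (Uc'.filter (fun z =>
          ψ ((Q.filter (fun q => min (φ q) (ψ q) < x)).max' h) < z ∧ z < x)).card
  else (Uc.filter (fun z => z < x)).card + (Uc'.filter (fun z => z < x)).card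

theorem psi_swap (φ ψ : ℕ → ℕ) (Q Uc Uc' : Finset ℕ) (x : ℕ) :
    PsiFn ψ φ Q Uc' Uc x = PsiFn φ ψ Q Uc Uc' x := by
  unfold PsiFn
  have hset : (Q.filter (fun q => min (ψ q) (φ q) < x))
      = (Q.filter (fun q => min (φ q) (ψ q) < x)) := by
    apply filter_congr
    intro q _
    rw [min_comm]
  rw [hset]
  split
  · omega
  · omega

theorem psi_mono (k : ℕ) (φ ψ : ℕ → ℕ) (Q Uc Uc' : Finset ℕ)
    (h0 : ∀ q ∈ Q, q ≤ φ q ∧ φ q ≤ q + 3 * k ∧ q ≤ ψ q ∧ ψ q ≤ q + 3 * k)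
    (htr0 : ∀ q ∈ Q, (Uc.filter (fun z => z < φ q)).card + q ≤ φ q)
    (htr0' : ∀ q ∈ Q, (Uc'.filter (fun z => z < ψ q)).card + q ≤ ψ q)
    (htr : ∀ q ∈ Q, ∀ q' ∈ Q, q < q' →
      φ q + ((Uc.filter (fun z => φ q < z ∧ z < φ q')).card + q') ≤ φ q' + q)
    (htr' : ∀ q ∈ Q, ∀ q' ∈ Q, q < q' →
      ψ q + ((Uc'.filter (fun z => ψ q < z ∧ z < ψ q')).card + q') ≤ ψ q' + q)
    {x y : ℕ} (hxy : x ≤ y) :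
    PsiFn φ ψ Q Uc Uc' x ≤ PsiFn φ ψ Q Uc Uc' y := by
  have hsub : (Q.filter (fun q => min (φ q) (ψ q) < x))
      ⊆ (Q.filter (fun q => min (φ q) (ψ q) < y)) := by
    intro q hq
    rw [mem_filter] at *
    exact ⟨hq.1, lt_of_lt_of_le hq.2 hxy⟩
  unfold PsiFn
  by_cases hx : (Q.filter (fun q => min (φ q) (ψ q) < x)).Nonempty
  · rw [dif_pos hx, dif_pos (hx.mono hsub)]
    set q := (Q.filter (fun q => min (φ q) (ψ q) < x)).max' hx with hqdef
    set q' := (Q.filter (fun q => min (φ q) (ψ q) < y)).max' (hx.mono hsub) with hq'def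
    have hqmem := (Q.filter (fun q => min (φ q) (ψ q) < x)).max'_mem hx
    have hq'mem := (Q.filter (fun q => min (φ q) (ψ q) < y)).max'_mem (hx.mono hsub)
    rw [mem_filter] at hqmem hq'mem
    have hqq' : q ≤ q' := le_max' _ _ (hsub ((Q.filter (fun q => min (φ q) (ψ q) < x)).max'_mem hx))
    rcases eq_or_lt_of_le hqq' with heq | hlt
    · rw [← heq]
      have e1 : (Uc.filter (fun z => φ q < z ∧ z < x)).card
          ≤ (Uc.filter (fun z => φ q < z ∧ z < y)).card := by
        apply card_le_card
        intro z hz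
        rw [mem_filter] at *
        exact ⟨hz.1, hz.2.1, by omega⟩
      have e2 : (Uc'.filter (fun z => ψ q < z ∧ z < x)).card
          ≤ (Uc'.filter (fun z => ψ q < z ∧ z < y)).card := by
        apply card_le_card
        intro z hz
        rw [mem_filter] at *
        exact ⟨hz.1, hz.2.1, by omega⟩
      omega
    · have hq'nx : ¬ (min (φ q') (ψ q') < x) := by
        intro hc
        have : q' ∈ Q.filter (fun q => min (φ q) (ψ q) < x) := by
          rw [mem_filter]; exact ⟨hq'mem.1, hc⟩
        have := le_max' _ _ this
        omega
      have hxφ : x ≤ φ q' := le_trans (not_lt.mp hq'nx) (min_le_left _ _)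
      have hxψ : x ≤ ψ q' := le_trans (not_lt.mp hq'nx) (min_le_right _ _)
      have e1 : (Uc.filter (fun z => φ q < z ∧ z < x)).card
          ≤ (Uc.filter (fun z => φ q < z ∧ z < φ q')).card := by
        apply card_le_card
        intro z hz
        rw [mem_filter] at *
        exact ⟨hz.1, hz.2.1, by omega⟩
      have e2 : (Uc'.filter (fun z => ψ q < z ∧ z < x)).card
          ≤ (Uc'.filter (fun z => ψ q < z ∧ z < ψ q')).card := by
        apply card_le_card
        intro z hz
        rw [mem_filter] at *
        exact ⟨hz.1, hz.2.1, by omega⟩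
      have t1 := htr q hqmem.1 q' hq'mem.1 hlt
      have t2 := htr' q hqmem.1 q' hq'mem.1 hlt
      have u1 := (h0 q hqmem.1).1
      have u2 := (h0 q hqmem.1).2.2.1
      have u3 := (h0 q' hq'mem.1).1
      have u4 := (h0 q' hq'mem.1).2.2.1
      omega
  · rw [dif_neg hx]
    by_cases hy : (Q.filter (fun q => min (φ q) (ψ q) < y)).Nonempty
    · rw [dif_pos hy]
      set q' := (Q.filter (fun q => min (φ q) (ψ q) < y)).max' hy with hq'def
      have hq'mem := (Q.filter (fun q => min (φ q) (ψ q) < y)).max'_mem hy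
      rw [mem_filter] at hq'mem
      have hq'nx : ¬ (min (φ q') (ψ q') < x) := by
        intro hc
        exact hx ⟨q', by rw [mem_filter]; exact ⟨hq'mem.1, hc⟩⟩
      have hxφ : x ≤ φ q' := le_trans (not_lt.mp hq'nx) (min_le_left _ _)
      have hxψ : x ≤ ψ q' := le_trans (not_lt.mp hq'nx) (min_le_right _ _)
      have e1 : (Uc.filter (fun z => z < x)).card
          ≤ (Uc.filter (fun z => z < φ q')).card := by
        apply card_le_card
        intro z hz
        rw [mem_filter] at *
        exact ⟨hz.1, by omega⟩
      have e2 : (Uc'.filter (fun z => z < x)).card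
          ≤ (Uc'.filter (fun z => z < ψ q')).card := by
        apply card_le_card
        intro z hz
        rw [mem_filter] at *
        exact ⟨hz.1, by omega⟩
      have t1 := htr0 q' hq'mem.1
      have t2 := htr0' q' hq'mem.1
      have u3 := (h0 q' hq'mem.1).1
      have u4 := (h0 q' hq'mem.1).2.2.1
      omega
    · rw [dif_neg hy]
      have e1 : (Uc.filter (fun z => z < x)).card ≤ (Uc.filter (fun z => z < y)).card := by
        apply card_le_card
        intro z hz
        rw [mem_filter] at *
        exact ⟨hz.1, by omega⟩
      have e2 : (Uc'.filter (fun z => z < x)).card ≤ (Uc'.filter (fun z => z < y)).card := by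
        apply card_le_card
        intro z hz
        rw [mem_filter] at *
        exact ⟨hz.1, by omega⟩
      omega

theorem psi_le (k : ℕ) (φ ψ : ℕ → ℕ) (Q Uc Uc' : Finset ℕ)
    (h0 : ∀ q ∈ Q, q ≤ φ q ∧ φ q ≤ q + 3 * k ∧ q ≤ ψ q ∧ ψ q ≤ q + 3 * k)
    (hbud : ∀ q ∈ Q, φ q + (Uc.filter (fun z => φ q < z)).card ≤ q + 3 * k)
    (hbud' : ∀ q ∈ Q, ψ q + (Uc'.filter (fun z => ψ q < z)).card ≤ q + 3 * k)
    (hbud0 : Uc.card ≤ 3 * k) (hbud0' : Uc'.card ≤ 3 * k) (x : ℕ) :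
    PsiFn φ ψ Q Uc Uc' x ≤ 6 * k := by
  unfold PsiFn
  by_cases hx : (Q.filter (fun q => min (φ q) (ψ q) < x)).Nonempty
  · rw [dif_pos hx]
    set q := (Q.filter (fun q => min (φ q) (ψ q) < x)).max' hx with hqdef
    have hqmem := (Q.filter (fun q => min (φ q) (ψ q) < x)).max'_mem hx
    rw [mem_filter] at hqmem
    have e1 : (Uc.filter (fun z => φ q < z ∧ z < x)).card
        ≤ (Uc.filter (fun z => φ q < z)).card := by
      apply card_le_card
      intro z hz
      rw [mem_filter] at *
      exact ⟨hz.1, hz.2.1⟩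
    have e2 : (Uc'.filter (fun z => ψ q < z ∧ z < x)).card
        ≤ (Uc'.filter (fun z => ψ q < z)).card := by
      apply card_le_card
      intro z hz
      rw [mem_filter] at *
      exact ⟨hz.1, hz.2.1⟩
    have t1 := hbud q hqmem.1
    have t2 := hbud' q hqmem.1
    have u1 := (h0 q hqmem.1).1
    have u2 := (h0 q hqmem.1).2.2.1
    omega
  · rw [dif_neg hx]
    have e1 : (Uc.filter (fun z => z < x)).card ≤ Uc.card := card_le_card (filter_subset _ _)
    have e2 : (Uc'.filter (fun z => z < x)).card ≤ Uc'.card := card_le_card (filter_subset _ _)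
    omega

theorem jump_step (k : ℕ) (φ ψ : ℕ → ℕ) (Q Uc Uc' : Finset ℕ)
    (h0 : ∀ q ∈ Q, q ≤ φ q ∧ φ q ≤ q + 3 * k ∧ q ≤ ψ q ∧ ψ q ≤ q + 3 * k)
    (htr0 : ∀ q ∈ Q, (Uc.filter (fun z => z < φ q)).card + q ≤ φ q)
    (htr0' : ∀ q ∈ Q, (Uc'.filter (fun z => z < ψ q)).card + q ≤ ψ q)
    (htr : ∀ q ∈ Q, ∀ q' ∈ Q, q < q' →
      φ q + ((Uc.filter (fun z => φ q < z ∧ z < φ q')).card + q') ≤ φ q' + q)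
    (htr' : ∀ q ∈ Q, ∀ q' ∈ Q, q < q' →
      ψ q + ((Uc'.filter (fun z => ψ q < z ∧ z < ψ q')).card + q') ≤ ψ q' + q)
    (hsepU' : ∀ z ∈ Uc', ∀ q ∈ Q, z ≠ ψ q ∧ (z < ψ q → z + 3 * k ≤ ψ q) ∧
      (ψ q < z → ψ q + 3 * k ≤ z))
    {z : ℕ} (hz : z ∈ Uc') :
    PsiFn φ ψ Q Uc Uc' z + 1 ≤ PsiFn φ ψ Q Uc Uc' (z + 1) := by
  have hsub : (Q.filter (fun q => min (φ q) (ψ q) < z))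
      ⊆ (Q.filter (fun q => min (φ q) (ψ q) < z + 1)) := by
    intro q hq
    rw [mem_filter] at *
    exact ⟨hq.1, by omega⟩
  unfold PsiFn
  by_cases hS : (Q.filter (fun q => min (φ q) (ψ q) < z)).Nonempty
  · rw [dif_pos hS, dif_pos (hS.mono hsub)]
    set q := (Q.filter (fun q => min (φ q) (ψ q) < z)).max' hS with hqdef
    set q' := (Q.filter (fun q => min (φ q) (ψ q) < z + 1)).max' (hS.mono hsub) with hq'def
    have hqmem := (Q.filter (fun q => min (φ q) (ψ q) < z)).max'_mem hS
    have hq'mem := (Q.filter (fun q => min (φ q) (ψ q) < z + 1)).max'_mem (hS.mono hsub)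
    rw [mem_filter] at hqmem hq'mem
    rw [← hqdef] at hqmem
    rw [← hq'def] at hq'mem
    have hqq' : q ≤ q' := le_max' _ _
      (hsub ((Q.filter (fun q => min (φ q) (ψ q) < z)).max'_mem hS))
    -- ψ q < z
    have hψq : ψ q < z := by
      rcases lt_or_ge (ψ q) z with h | h
      · exact h
      · exfalso
        have hφq : φ q < z := by
          rcases min_lt_iff.mp hqmem.2 with h' | h'
          · exact h'
          · omega
        obtain ⟨hne, hlt, -⟩ := hsepU' z hz q hqmem.1
        have hzψ : z < ψ q := by omega
        have := hlt hzψ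
        have := (h0 q hqmem.1).2.2.2
        have := (h0 q hqmem.1).1
        omega
    rcases eq_or_lt_of_le hqq' with heq | hlt
    · rw [← heq]
      have e1 : (Uc.filter (fun w => φ q < w ∧ w < z)).card
          ≤ (Uc.filter (fun w => φ q < w ∧ w < z + 1)).card := by
        apply card_le_card
        intro w hw
        rw [mem_filter] at *
        exact ⟨hw.1, hw.2.1, by omega⟩
      have e2 : (Uc'.filter (fun w => ψ q < w ∧ w < z)).card
          < (Uc'.filter (fun w => ψ q < w ∧ w < z + 1)).card := by
        apply card_lt_card
        rw [Finset.ssubset_iff_of_subset (by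
          intro w hw
          rw [mem_filter] at *
          exact ⟨hw.1, hw.2.1, by omega⟩)]
        refine ⟨z, by rw [mem_filter]; exact ⟨hz, hψq, by omega⟩, ?_⟩
        rw [mem_filter]
        push_neg
        intro _ _
        omega
      omega
    · -- the max jumped to q' with min (φ q') (ψ q') = z
      have hq'nS : ¬ (min (φ q') (ψ q') < z) := by
        intro hc
        have : q' ∈ Q.filter (fun q => min (φ q) (ψ q) < z) := by
          rw [mem_filter]; exact ⟨hq'mem.1, hc⟩
        have := le_max' _ _ this
        omega
      have hzφ : z ≤ φ q' := by
        have := min_le_left (φ q') (ψ q')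
        omega
      have hzψ' : z < ψ q' := by
        have h1 : z ≤ ψ q' := by
          have := min_le_right (φ q') (ψ q')
          omega
        obtain ⟨hne, -, -⟩ := hsepU' z hz q' hq'mem.1
        omega
      have e1 : (Uc.filter (fun w => φ q < w ∧ w < z)).card
          ≤ (Uc.filter (fun w => φ q < w ∧ w < φ q')).card := by
        apply card_le_card
        intro w hw
        rw [mem_filter] at *
        exact ⟨hw.1, hw.2.1, by omega⟩
      have e2 : (Uc'.filter (fun w => ψ q < w ∧ w < z)).card
          < (Uc'.filter (fun w => ψ q < w ∧ w < ψ q')).card := by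
        apply card_lt_card
        rw [Finset.ssubset_iff_of_subset (by
          intro w hw
          rw [mem_filter] at *
          exact ⟨hw.1, hw.2.1, by omega⟩)]
        refine ⟨z, by rw [mem_filter]; exact ⟨hz, hψq, hzψ'⟩, ?_⟩
        rw [mem_filter]
        push_neg
        intro _ _
        omega
      have t1 := htr q hqmem.1 q' hq'mem.1 hlt
      have t2 := htr' q hqmem.1 q' hq'mem.1 hlt
      have u1 := (h0 q hqmem.1).1
      have u2 := (h0 q hqmem.1).2.2.1
      have u3 := (h0 q' hq'mem.1).1
      have u4 := (h0 q' hq'mem.1).2.2.1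
      omega
  · rw [dif_neg hS]
    by_cases hS' : (Q.filter (fun q => min (φ q) (ψ q) < z + 1)).Nonempty
    · rw [dif_pos hS']
      set q' := (Q.filter (fun q => min (φ q) (ψ q) < z + 1)).max' hS' with hq'def
      have hq'mem := (Q.filter (fun q => min (φ q) (ψ q) < z + 1)).max'_mem hS'
      rw [mem_filter] at hq'mem
      rw [← hq'def] at hq'mem
      have hq'nS : ¬ (min (φ q') (ψ q') < z) := by
        intro hc
        exact hS ⟨q', by rw [mem_filter]; exact ⟨hq'mem.1, hc⟩⟩
      have hzφ : z ≤ φ q' := by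
        have := min_le_left (φ q') (ψ q')
        omega
      have hzψ' : z < ψ q' := by
        have h1 : z ≤ ψ q' := by
          have := min_le_right (φ q') (ψ q')
          omega
        obtain ⟨hne, -, -⟩ := hsepU' z hz q' hq'mem.1
        omega
      have e1 : (Uc.filter (fun w => w < z)).card
          ≤ (Uc.filter (fun w => w < φ q')).card := by
        apply card_le_card
        intro w hw
        rw [mem_filter] at *
        exact ⟨hw.1, by omega⟩
      have e2 : (Uc'.filter (fun w => w < z)).card
          < (Uc'.filter (fun w => w < ψ q')).card := by
        apply card_lt_card
        rw [Finset.ssubset_iff_of_subset (by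
          intro w hw
          rw [mem_filter] at *
          exact ⟨hw.1, by omega⟩)]
        refine ⟨z, by rw [mem_filter]; exact ⟨hz, hzψ'⟩, ?_⟩
        rw [mem_filter]
        push_neg
        intro _
        omega
      have t1 := htr0 q' hq'mem.1
      have t2 := htr0' q' hq'mem.1
      have u3 := (h0 q' hq'mem.1).1
      have u4 := (h0 q' hq'mem.1).2.2.1
      omega
    · rw [dif_neg hS']
      have e1 : (Uc.filter (fun w => w < z)).card
          ≤ (Uc.filter (fun w => w < z + 1)).card := by
        apply card_le_card
        intro w hw
        rw [mem_filter] at *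
        exact ⟨hw.1, by omega⟩
      have e2 : (Uc'.filter (fun w => w < z)).card
          < (Uc'.filter (fun w => w < z + 1)).card := by
        apply card_lt_card
        rw [Finset.ssubset_iff_of_subset (by
          intro w hw
          rw [mem_filter] at *
          exact ⟨hw.1, by omega⟩)]
        refine ⟨z, by rw [mem_filter]; exact ⟨hz, by omega⟩, ?_⟩
        rw [mem_filter]
        push_neg
        intro _
        omega
      omega

theorem flip_step (k : ℕ) (φ ψ : ℕ → ℕ) (Q Uc Uc' : Finset ℕ) (g : ℕ → ℤ)
    (hg : ∀ x, g x = (((Q.filter (fun q => x ≤ φ q)).card : ℤ)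
        + ((Uc.filter (fun z => x ≤ z)).card : ℤ))
      - (((Q.filter (fun q => x ≤ ψ q)).card : ℤ)
        + ((Uc'.filter (fun z => x ≤ z)).card : ℤ)))
    (h0 : ∀ q ∈ Q, q ≤ φ q ∧ φ q ≤ q + 3 * k ∧ q ≤ ψ q ∧ ψ q ≤ q + 3 * k)
    (h1 : ∀ q ∈ Q, ∀ q' ∈ Q, q < q' → φ q + 3 * k ≤ φ q' ∧ ψ q + 3 * k ≤ ψ q')
    (htr0 : ∀ q ∈ Q, (Uc.filter (fun z => z < φ q)).card + q ≤ φ q)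
    (htr0' : ∀ q ∈ Q, (Uc'.filter (fun z => z < ψ q)).card + q ≤ ψ q)
    (htr : ∀ q ∈ Q, ∀ q' ∈ Q, q < q' →
      φ q + ((Uc.filter (fun z => φ q < z ∧ z < φ q')).card + q') ≤ φ q' + q)
    (htr' : ∀ q ∈ Q, ∀ q' ∈ Q, q < q' →
      ψ q + ((Uc'.filter (fun z => ψ q < z ∧ z < ψ q')).card + q') ≤ ψ q' + q)
    (hsepU : ∀ z ∈ Uc, ∀ q ∈ Q, z ≠ φ q ∧ (z < φ q → z + 3 * k ≤ φ q) ∧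
      (φ q < z → φ q + 3 * k ≤ z))
    (hsepU' : ∀ z ∈ Uc', ∀ q ∈ Q, z ≠ ψ q ∧ (z < ψ q → z + 3 * k ≤ ψ q) ∧
      (ψ q < z → ψ q + 3 * k ≤ z))
    {x y : ℕ} (hxy : x < y) (hgx : 0 < g x) (hgy : g y < 0) :
    PsiFn φ ψ Q Uc Uc' x + 1 ≤ PsiFn φ ψ Q Uc Uc' y := by
  by_cases hzU : ∃ z, (z ∈ Uc ∨ z ∈ Uc') ∧ x ≤ z ∧ z < y
  · obtain ⟨z, hzmem, hxz, hzy⟩ := hzU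
    have hjump : PsiFn φ ψ Q Uc Uc' z + 1 ≤ PsiFn φ ψ Q Uc Uc' (z + 1) := by
      rcases hzmem with hzc | hzc'
      · have := jump_step k ψ φ Q Uc' Uc
          (fun q hq => ⟨(h0 q hq).2.2.1, (h0 q hq).2.2.2, (h0 q hq).1, (h0 q hq).2.1⟩)
          htr0' htr0 htr' htr hsepU hzc
        rwa [psi_swap φ ψ Q Uc Uc' z, psi_swap φ ψ Q Uc Uc' (z + 1)] at this
      · exact jump_step k φ ψ Q Uc Uc' h0 htr0 htr0' htr htr' hsepU' hzc'
    have m1 : PsiFn φ ψ Q Uc Uc' x ≤ PsiFn φ ψ Q Uc Uc' z :=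
      psi_mono k φ ψ Q Uc Uc' h0 htr0 htr0' htr htr' hxz
    have m2 : PsiFn φ ψ Q Uc Uc' (z + 1) ≤ PsiFn φ ψ Q Uc Uc' y :=
      psi_mono k φ ψ Q Uc Uc' h0 htr0 htr0' htr htr' (by omega)
    omega
  · push_neg at hzU
    have hUeq : Uc.filter (fun z => x ≤ z) = Uc.filter (fun z => y ≤ z) := by
      ext z
      rw [mem_filter, mem_filter]
      constructor
      · rintro ⟨hzc, hxz⟩
        exact ⟨hzc, hzU z (Or.inl hzc) hxz⟩
      · rintro ⟨hzc, hyz⟩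
        exact ⟨hzc, by omega⟩
    have hU'eq : Uc'.filter (fun z => x ≤ z) = Uc'.filter (fun z => y ≤ z) := by
      ext z
      rw [mem_filter, mem_filter]
      constructor
      · rintro ⟨hzc, hxz⟩
        exact ⟨hzc, hzU z (Or.inr hzc) hxz⟩
      · rintro ⟨hzc, hyz⟩
        exact ⟨hzc, by omega⟩
    have hdisj : ∀ q ∈ Q, ∀ q' ∈ Q, q < q' → max (φ q) (ψ q) ≤ min (φ q') (ψ q') := by
      intro q hq q' hq' hlt
      obtain ⟨a1, a2⟩ := h1 q hq q' hq' hlt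
      have b := h0 q hq
      have b' := h0 q' hq'
      rw [max_le_iff]
      constructor <;> rw [le_min_iff] <;> constructor <;> omega
    have hins : ∀ u q, q ∈ Q → ψ q < u → u ≤ φ q →
        ((Q.filter (fun r => u ≤ φ r)).card : ℤ) = (Q.filter (fun r => u ≤ ψ r)).card + 1 := by
      intro u q hq hq1 hq2
      have hset : Q.filter (fun r => u ≤ φ r) = insert q (Q.filter (fun r => u ≤ ψ r)) := by
        ext r
        rw [mem_filter, mem_insert, mem_filter]
        constructor
        · rintro ⟨hrQ, hur⟩
          rcases lt_trichotomy r q with h | h | h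
          · exfalso
            have hd := hdisj r hrQ q hq h
            have h3 : φ r ≤ max (φ r) (ψ r) := le_max_left _ _
            have h4 : min (φ q) (ψ q) ≤ ψ q := min_le_right _ _
            omega
          · exact Or.inl h
          · refine Or.inr ⟨hrQ, ?_⟩
            have hd := hdisj q hq r hrQ h
            have h3 : φ q ≤ max (φ q) (ψ q) := le_max_left _ _
            have h4 : min (φ r) (ψ r) ≤ ψ r := min_le_right _ _
            omega
        · rintro (rfl | ⟨hrQ, hur⟩)
          · exact ⟨hq, hq2⟩
          · refine ⟨hrQ, ?_⟩
            rcases lt_trichotomy r q with h | h | h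
            · exfalso
              have hd := hdisj r hrQ q hq h
              have h3 : ψ r ≤ max (φ r) (ψ r) := le_max_right _ _
              have h4 : min (φ q) (ψ q) ≤ ψ q := min_le_right _ _
              omega
            · rw [h]
              exact hq2
            · have hd := hdisj q hq r hrQ h
              have h3 : φ q ≤ max (φ q) (ψ q) := le_max_left _ _
              have h4 : min (φ r) (ψ r) ≤ φ r := min_le_left _ _
              omega
      have hqnot : q ∉ Q.filter (fun r => u ≤ ψ r) := by
        rw [mem_filter]
        push_neg
        intro _
        omega
      rw [hset, card_insert_of_notMem hqnot]
      push_cast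
      ring
    have hins' : ∀ u q, q ∈ Q → φ q < u → u ≤ ψ q →
        ((Q.filter (fun r => u ≤ ψ r)).card : ℤ) = (Q.filter (fun r => u ≤ φ r)).card + 1 := by
      intro u q hq hq1 hq2
      have hset : Q.filter (fun r => u ≤ ψ r) = insert q (Q.filter (fun r => u ≤ φ r)) := by
        ext r
        rw [mem_filter, mem_insert, mem_filter]
        constructor
        · rintro ⟨hrQ, hur⟩
          rcases lt_trichotomy r q with h | h | h
          · exfalso
            have hd := hdisj r hrQ q hq h
            have h3 : ψ r ≤ max (φ r) (ψ r) := le_max_right _ _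
            have h4 : min (φ q) (ψ q) ≤ φ q := min_le_left _ _
            omega
          · exact Or.inl h
          · refine Or.inr ⟨hrQ, ?_⟩
            have hd := hdisj q hq r hrQ h
            have h3 : ψ q ≤ max (φ q) (ψ q) := le_max_right _ _
            have h4 : min (φ r) (ψ r) ≤ φ r := min_le_left _ _
            omega
        · rintro (rfl | ⟨hrQ, hur⟩)
          · exact ⟨hq, hq2⟩
          · refine ⟨hrQ, ?_⟩
            rcases lt_trichotomy r q with h | h | h
            · exfalso
              have hd := hdisj r hrQ q hq h
              have h3 : φ r ≤ max (φ r) (ψ r) := le_max_left _ _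
              have h4 : min (φ q) (ψ q) ≤ φ q := min_le_left _ _
              omega
            · rw [h]
              exact hq2
            · have hd := hdisj q hq r hrQ h
              have h3 : ψ q ≤ max (φ q) (ψ q) := le_max_right _ _
              have h4 : min (φ r) (ψ r) ≤ ψ r := min_le_right _ _
              omega
      have hqnot : q ∉ Q.filter (fun r => u ≤ φ r) := by
        rw [mem_filter]
        push_neg
        intro _
        omega
      rw [hset, card_insert_of_notMem hqnot]
      push_cast
      ring
    have hch0 : ∀ u, (∀ q ∈ Q, ¬(min (φ q) (ψ q) < u ∧ u ≤ max (φ q) (ψ q))) →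
        (Q.filter (fun r => u ≤ φ r)) = (Q.filter (fun r => u ≤ ψ r)) := by
      intro u hu
      ext r
      rw [mem_filter, mem_filter]
      constructor
      · rintro ⟨hrQ, hur⟩
        refine ⟨hrQ, ?_⟩
        have hq := hu r hrQ
        have h3 : φ r ≤ max (φ r) (ψ r) := le_max_left _ _
        have h4 : min (φ r) (ψ r) ≤ ψ r := min_le_right _ _
        have h5 : min (φ r) (ψ r) ≤ φ r := min_le_left _ _
        have h6 : ψ r ≤ max (φ r) (ψ r) := le_max_right _ _
        omega
      · rintro ⟨hrQ, hur⟩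
        refine ⟨hrQ, ?_⟩
        have hq := hu r hrQ
        have h3 : φ r ≤ max (φ r) (ψ r) := le_max_left _ _
        have h4 : min (φ r) (ψ r) ≤ ψ r := min_le_right _ _
        have h5 : min (φ r) (ψ r) ≤ φ r := min_le_left _ _
        have h6 : ψ r ≤ max (φ r) (ψ r) := le_max_right _ _
        omega
    have htri : ∀ u, ((Q.filter (fun r => u ≤ φ r)).card : ℤ)
          = (Q.filter (fun r => u ≤ ψ r)).card ∨
        ((∃ q ∈ Q, ψ q < u ∧ u ≤ φ q) ∧ ((Q.filter (fun r => u ≤ φ r)).card : ℤ)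
          = (Q.filter (fun r => u ≤ ψ r)).card + 1) ∨
        ((∃ q ∈ Q, φ q < u ∧ u ≤ ψ q) ∧ ((Q.filter (fun r => u ≤ ψ r)).card : ℤ)
          = (Q.filter (fun r => u ≤ φ r)).card + 1) := by
      intro u
      by_cases hex : ∃ q ∈ Q, min (φ q) (ψ q) < u ∧ u ≤ max (φ q) (ψ q)
      · obtain ⟨q, hq, hq1, hq2⟩ := hex
        rcases le_total (φ q) (ψ q) with h | h
        · rw [min_eq_left h] at hq1
          rw [max_eq_right h] at hq2
          exact Or.inr (Or.inr ⟨⟨q, hq, hq1, hq2⟩, hins' u q hq hq1 hq2⟩)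
        · rw [min_eq_right h] at hq1
          rw [max_eq_left h] at hq2
          exact Or.inr (Or.inl ⟨⟨q, hq, hq1, hq2⟩, hins u q hq hq1 hq2⟩)
      · push_neg at hex
        left
        rw [hch0 u (fun q hq => by
          have := hex q hq
          omega)]
    -- now the pure interval-driven case
    have hcU : ((Uc.filter (fun z => x ≤ z)).card : ℤ)
        = (Uc.filter (fun z => y ≤ z)).card := by rw [hUeq]
    have hcU' : ((Uc'.filter (fun z => x ≤ z)).card : ℤ)
        = (Uc'.filter (fun z => y ≤ z)).card := by rw [hU'eq]
    have hgx' := hg x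
    have hgy' := hg y
    rcases htri x with t1 | ⟨⟨qx, hqxQ, hqx1, hqx2⟩, t1⟩ | ⟨t1w, t1⟩
    · exfalso
      rcases htri y with t2 | ⟨-, t2⟩ | ⟨-, t2⟩ <;> omega
    · rcases htri y with t2 | ⟨-, t2⟩ | ⟨⟨qy, hqyQ, hqy1, hqy2⟩, t2⟩
      · exfalso; omega
      · exfalso; omega
      · -- the h-driven flip : qx (+) then qy (−)
        have hqxy : qx < qy := by
          rcases lt_trichotomy qx qy with h | h | h
          · exact h
          · exfalso
            rw [h] at hqx1 hqx2
            omega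
          · exfalso
            have hd := hdisj qy hqyQ qx hqxQ h
            have h3 : ψ qy ≤ max (φ qy) (ψ qy) := le_max_right _ _
            have h4 : min (φ qx) (ψ qx) ≤ ψ qx := min_le_right _ _
            omega
        have hnex : (Q.filter (fun q => min (φ q) (ψ q) < x)).Nonempty := by
          refine ⟨qx, ?_⟩
          rw [mem_filter]
          refine ⟨hqxQ, lt_of_le_of_lt (min_le_right _ _) hqx1⟩
        have hney : (Q.filter (fun q => min (φ q) (ψ q) < y)).Nonempty := by
          refine ⟨qy, ?_⟩
          rw [mem_filter]
          refine ⟨hqyQ, lt_of_le_of_lt (min_le_left _ _) hqy1⟩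
        have hmaxx : (Q.filter (fun q => min (φ q) (ψ q) < x)).max' hnex = qx := by
          apply le_antisymm
          · apply max'_le
            intro r hr
            rw [mem_filter] at hr
            by_contra hc
            push_neg at hc
            have hd := hdisj qx hqxQ r hr.1 hc
            have h3 : φ qx ≤ max (φ qx) (ψ qx) := le_max_left _ _
            omega
          · apply le_max'
            rw [mem_filter]
            exact ⟨hqxQ, lt_of_le_of_lt (min_le_right _ _) hqx1⟩
        have hmaxy : (Q.filter (fun q => min (φ q) (ψ q) < y)).max' hney = qy := by
          apply le_antisymm
          · apply max'_le
            intro r hr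
            rw [mem_filter] at hr
            by_contra hc
            push_neg at hc
            have hd := hdisj qy hqyQ r hr.1 hc
            have h3 : ψ qy ≤ max (φ qy) (ψ qy) := le_max_right _ _
            omega
          · apply le_max'
            rw [mem_filter]
            exact ⟨hqyQ, lt_of_le_of_lt (min_le_left _ _) hqy1⟩
        have hc0 : Uc.filter (fun z => φ qx < z ∧ z < x) = ∅ := by
          rw [filter_eq_empty_iff]
          rintro z hz ⟨hz1, hz2⟩
          omega
        have hc0' : Uc'.filter (fun z => ψ qx < z ∧ z < x) = ∅ := by
          rw [filter_eq_empty_iff]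
          rintro z hz ⟨hz1, hz2⟩
          have hd := (hsepU' z hz qx hqxQ).2.2 hz1
          have h3 := (h0 qx hqxQ).2.1
          have h4 := (h0 qx hqxQ).2.2.1
          omega
        unfold PsiFn
        rw [dif_pos hnex, dif_pos hney, hmaxx, hmaxy, hc0, hc0']
        have t3 := htr qx hqxQ qy hqyQ hqxy
        have t4 := htr' qx hqxQ qy hqyQ hqxy
        have u1 := (h0 qx hqxQ).1
        have u2 := (h0 qx hqxQ).2.2.1
        have u3 := (h0 qy hqyQ).1
        have u4 := (h0 qy hqyQ).2.2.1
        simp only [card_empty]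
        omega
    · exfalso
      obtain ⟨qx', hqx'Q, hx1, hx2⟩ := t1w
      rcases htri y with t2 | ⟨-, t2⟩ | ⟨-, t2⟩ <;> omega

theorem no_chain (k : ℕ) (φ ψ : ℕ → ℕ) (Q Uc Uc' : Finset ℕ) (g : ℕ → ℤ)
    (hg : ∀ x, g x = (((Q.filter (fun q => x ≤ φ q)).card : ℤ)
        + ((Uc.filter (fun z => x ≤ z)).card : ℤ))
      - (((Q.filter (fun q => x ≤ ψ q)).card : ℤ)
        + ((Uc'.filter (fun z => x ≤ z)).card : ℤ)))
    (h0 : ∀ q ∈ Q, q ≤ φ q ∧ φ q ≤ q + 3 * k ∧ q ≤ ψ q ∧ ψ q ≤ q + 3 * k)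
    (h1 : ∀ q ∈ Q, ∀ q' ∈ Q, q < q' → φ q + 3 * k ≤ φ q' ∧ ψ q + 3 * k ≤ ψ q')
    (htr0 : ∀ q ∈ Q, (Uc.filter (fun z => z < φ q)).card + q ≤ φ q)
    (htr0' : ∀ q ∈ Q, (Uc'.filter (fun z => z < ψ q)).card + q ≤ ψ q)
    (htr : ∀ q ∈ Q, ∀ q' ∈ Q, q < q' →
      φ q + ((Uc.filter (fun z => φ q < z ∧ z < φ q')).card + q') ≤ φ q' + q)
    (htr' : ∀ q ∈ Q, ∀ q' ∈ Q, q < q' →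
      ψ q + ((Uc'.filter (fun z => ψ q < z ∧ z < ψ q')).card + q') ≤ ψ q' + q)
    (hsepU : ∀ z ∈ Uc, ∀ q ∈ Q, z ≠ φ q ∧ (z < φ q → z + 3 * k ≤ φ q) ∧
      (φ q < z → φ q + 3 * k ≤ z))
    (hsepU' : ∀ z ∈ Uc', ∀ q ∈ Q, z ≠ ψ q ∧ (z < ψ q → z + 3 * k ≤ ψ q) ∧
      (ψ q < z → ψ q + 3 * k ≤ z))
    (hbud : ∀ q ∈ Q, φ q + (Uc.filter (fun z => φ q < z)).card ≤ q + 3 * k)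
    (hbud' : ∀ q ∈ Q, ψ q + (Uc'.filter (fun z => ψ q < z)).card ≤ q + 3 * k)
    (hbud0 : Uc.card ≤ 3 * k) (hbud0' : Uc'.card ≤ 3 * k)
    (f : ℕ → ℕ) (hmono : ∀ i ≤ 6 * k, f i < f (i + 1))
    (halt : ∀ i ≤ 6 * k, g (f i) * g (f (i + 1)) < 0) : False := by
  have step : ∀ i ≤ 6 * k, PsiFn φ ψ Q Uc Uc' (f i) + 1 ≤ PsiFn φ ψ Q Uc Uc' (f (i + 1)) := by
    intro i hi
    rcases mul_neg_iff.mp (halt i hi) with ⟨ha, hb⟩ | ⟨ha, hb⟩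
    · exact flip_step k φ ψ Q Uc Uc' g hg h0 h1 htr0 htr0' htr htr' hsepU hsepU'
        (hmono i hi) ha hb
    · have := flip_step k ψ φ Q Uc' Uc (fun u => -g u)
        (fun u => by beta_reduce; rw [hg u]; ring)
        (fun q hq => ⟨(h0 q hq).2.2.1, (h0 q hq).2.2.2, (h0 q hq).1, (h0 q hq).2.1⟩)
        (fun q hq q' hq' hlt => ⟨(h1 q hq q' hq' hlt).2, (h1 q hq q' hq' hlt).1⟩)
        htr0' htr0 htr' htr hsepU' hsepU
        (hmono i hi) (by simpa using ha) (by simpa using hb)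
      rwa [psi_swap φ ψ Q Uc Uc' (f i), psi_swap φ ψ Q Uc Uc' (f (i + 1))] at this
  have acc : ∀ i, i ≤ 6 * k + 1 → i ≤ PsiFn φ ψ Q Uc Uc' (f i) := by
    intro i
    induction i with
    | zero => omega
    | succ n ih =>
      intro hn
      have s1 := step n (by omega)
      have s2 := ih (by omega)
      omega
  have hA := acc (6 * k + 1) le_rfl
  have hB := psi_le k φ ψ Q Uc Uc' h0 hbud hbud' hbud0 hbud0' (f (6 * k + 1))
  omega


def OSet (n : ℕ) (c : List Bool) : Finset ℕ :=
  (range n).filter (fun i => c.getD i false = true)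

def QSet (ld : ℕ) (d : List Bool) : Finset ℕ :=
  (range ld).filter (fun q => d.getD q false = true)

def USet (n ld : ℕ) (c d : List Bool) (φ : ℕ → ℕ) : Finset ℕ :=
  (OSet n c).filter (fun i => ∀ q ∈ QSet ld d, φ q ≠ i)

lemma mem_OSet {n : ℕ} {c : List Bool} {i : ℕ} :
    i ∈ OSet n c ↔ i < n ∧ c.getD i false = true := by
  simp [OSet]

lemma mem_QSet {ld : ℕ} {d : List Bool} {q : ℕ} :
    q ∈ QSet ld d ↔ q < ld ∧ d.getD q false = true := by
  simp [QSet]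

private lemma strictmono_shift {φ : ℕ → ℕ} (h : StrictMono φ) (a t : ℕ) :
    φ a + t ≤ φ (a + t) := by
  induction t with
  | zero => simp
  | succ m ih =>
    have h3 : φ (a + m) < φ (a + (m + 1)) := by
      apply h
      omega
    omega

section Side

variable {n k ld : ℕ} {c d : List Bool} {φ : ℕ → ℕ}

lemma sf_sep (hr : ∀ i j : ℕ, i < j → c.getD i false = true → c.getD j false = true →
      3 * k ≤ j - i) :
    ∀ i ∈ OSet n c, ∀ j ∈ OSet n c, i < j → i + 3 * k ≤ j := by
  intro i hi j hj hij
  rw [mem_OSet] at hi hj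
  have := hr i j hij hi.2 hj.2
  omega

lemma sf_phi_mem (hget : ∀ q, q < ld → φ q < n ∧ c.getD (φ q) false = d.getD q false) :
    ∀ q ∈ QSet ld d, φ q ∈ OSet n c := by
  intro q hq
  rw [mem_QSet] at hq
  rw [mem_OSet]
  obtain ⟨h1, h2⟩ := hget q hq.1
  exact ⟨h1, by rw [h2]; exact hq.2⟩

lemma sf_h0 (hmono : StrictMono φ)
    (hget : ∀ q, q < ld → φ q < n ∧ c.getD (φ q) false = d.getD q false)
    (hlen2 : n ≤ ld + 3 * k) :
    ∀ q ∈ QSet ld d, q ≤ φ q ∧ φ q ≤ q + 3 * k := by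
  intro q hq
  rw [mem_QSet] at hq
  refine ⟨hmono.le_apply, ?_⟩
  have hL : ld - 1 < ld := by omega
  have h1 : φ (ld - 1) < n := (hget _ hL).1
  have h2 := strictmono_shift hmono q ((ld - 1) - q)
  have h3 : q + ((ld - 1) - q) = ld - 1 := by omega
  rw [h3] at h2
  omega

lemma sf_h1 (hmono : StrictMono φ)
    (hget : ∀ q, q < ld → φ q < n ∧ c.getD (φ q) false = d.getD q false)
    (hr : ∀ i j : ℕ, i < j → c.getD i false = true → c.getD j false = true → 3 * k ≤ j - i) :
    ∀ q ∈ QSet ld d, ∀ q' ∈ QSet ld d, q < q' → φ q + 3 * k ≤ φ q' := by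
  intro q hq q' hq' hlt
  exact sf_sep hr _ (sf_phi_mem hget q hq) _ (sf_phi_mem hget q' hq') (hmono hlt)

lemma sf_nimg (hget : ∀ q, q < ld → φ q < n ∧ c.getD (φ q) false = d.getD q false) :
    ∀ z ∈ USet n ld c d φ, ∀ r, r < ld → φ r ≠ z := by
  intro z hz r hr heq
  rw [USet, mem_filter] at hz
  obtain ⟨hzO, hzU⟩ := hz
  have h2 := (hget r hr).2
  rw [heq] at h2
  rw [mem_OSet] at hzO
  rw [hzO.2] at h2
  exact hzU r (mem_QSet.mpr ⟨hr, h2.symm⟩) heq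

lemma sf_sepU (hget : ∀ q, q < ld → φ q < n ∧ c.getD (φ q) false = d.getD q false)
    (hr : ∀ i j : ℕ, i < j → c.getD i false = true → c.getD j false = true → 3 * k ≤ j - i) :
    ∀ z ∈ USet n ld c d φ, ∀ q ∈ QSet ld d, z ≠ φ q ∧
      (z < φ q → z + 3 * k ≤ φ q) ∧ (φ q < z → φ q + 3 * k ≤ z) := by
  intro z hz q hq
  have hzO : z ∈ OSet n c := (filter_subset _ _) hz
  have hφO : φ q ∈ OSet n c := sf_phi_mem hget q hq
  have hne : φ q ≠ z := sf_nimg hget z hz q (mem_QSet.mp hq).1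
  exact ⟨fun h => hne h.symm, fun h => sf_sep hr _ hzO _ hφO h,
    fun h => sf_sep hr _ hφO _ hzO h⟩

lemma sf_htr0 (hmono : StrictMono φ)
    (hget : ∀ q, q < ld → φ q < n ∧ c.getD (φ q) false = d.getD q false) :
    ∀ q ∈ QSet ld d, ((USet n ld c d φ).filter (fun z => z < φ q)).card + q ≤ φ q := by
  intro q hq
  rw [mem_QSet] at hq
  have hdisj : Disjoint ((USet n ld c d φ).filter (fun z => z < φ q)) ((range q).image φ) := by
    rw [disjoint_right]
    intro z hzi hzf
    obtain ⟨r, hr, hrz⟩ := mem_image.mp hzi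
    rw [mem_range] at hr
    exact sf_nimg hget z ((filter_subset _ _) hzf) r (by omega) hrz
  have hsub : ((USet n ld c d φ).filter (fun z => z < φ q)) ∪ ((range q).image φ)
      ⊆ range (φ q) := by
    intro z hz
    rw [mem_union] at hz
    rw [mem_range]
    rcases hz with hz | hz
    · exact (mem_filter.mp hz).2
    · obtain ⟨r, hr, hrz⟩ := mem_image.mp hz
      rw [mem_range] at hr
      rw [← hrz]
      exact hmono hr
  have h1 := card_le_card hsub
  rw [card_union_of_disjoint hdisj, card_image_of_injective _ hmono.injective,
    card_range, card_range] at h1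
  omega

lemma sf_htr (hmono : StrictMono φ)
    (hget : ∀ q, q < ld → φ q < n ∧ c.getD (φ q) false = d.getD q false) :
    ∀ q ∈ QSet ld d, ∀ q' ∈ QSet ld d, q < q' →
      φ q + (((USet n ld c d φ).filter (fun z => φ q < z ∧ z < φ q')).card + q')
        ≤ φ q' + q := by
  intro q hq q' hq' hlt
  rw [mem_QSet] at hq hq'
  have hφlt : φ q < φ q' := hmono hlt
  have hdisj : Disjoint ((USet n ld c d φ).filter (fun z => φ q < z ∧ z < φ q'))
      ((Ioo q q').image φ) := by
    rw [disjoint_right]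
    intro z hzi hzf
    obtain ⟨r, hr, hrz⟩ := mem_image.mp hzi
    rw [mem_Ioo] at hr
    exact sf_nimg hget z ((filter_subset _ _) hzf) r (by omega) hrz
  have hsub : ((USet n ld c d φ).filter (fun z => φ q < z ∧ z < φ q')) ∪ ((Ioo q q').image φ)
      ⊆ Ioo (φ q) (φ q') := by
    intro z hz
    rw [mem_union] at hz
    rw [mem_Ioo]
    rcases hz with hz | hz
    · exact (mem_filter.mp hz).2
    · obtain ⟨r, hr, hrz⟩ := mem_image.mp hz
      rw [mem_Ioo] at hr
      rw [← hrz]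
      exact ⟨hmono hr.1, hmono hr.2⟩
  have h1 := card_le_card hsub
  rw [card_union_of_disjoint hdisj, card_image_of_injective _ hmono.injective,
    Nat.card_Ioo, Nat.card_Ioo] at h1
  omega

lemma sf_hbud (hmono : StrictMono φ)
    (hget : ∀ q, q < ld → φ q < n ∧ c.getD (φ q) false = d.getD q false)
    (hlen2 : n ≤ ld + 3 * k) :
    ∀ q ∈ QSet ld d, φ q + ((USet n ld c d φ).filter (fun z => φ q < z)).card
      ≤ q + 3 * k := by
  intro q hq
  rw [mem_QSet] at hq
  have hdisj : Disjoint ((USet n ld c d φ).filter (fun z => φ q < z))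
      ((Ioo q ld).image φ) := by
    rw [disjoint_right]
    intro z hzi hzf
    obtain ⟨r, hr, hrz⟩ := mem_image.mp hzi
    rw [mem_Ioo] at hr
    exact sf_nimg hget z ((filter_subset _ _) hzf) r hr.2 hrz
  have hsub : ((USet n ld c d φ).filter (fun z => φ q < z)) ∪ ((Ioo q ld).image φ)
      ⊆ Ioo (φ q) n := by
    intro z hz
    rw [mem_union] at hz
    rw [mem_Ioo]
    rcases hz with hz | hz
    · rw [mem_filter] at hz
      have := (mem_OSet.mp ((filter_subset _ _) hz.1)).1
      exact ⟨hz.2, this⟩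
    · obtain ⟨r, hr, hrz⟩ := mem_image.mp hz
      rw [mem_Ioo] at hr
      rw [← hrz]
      exact ⟨hmono hr.1, (hget r hr.2).1⟩
  have h1 := card_le_card hsub
  rw [card_union_of_disjoint hdisj, card_image_of_injective _ hmono.injective,
    Nat.card_Ioo, Nat.card_Ioo] at h1
  have hφn : φ q < n := (hget q hq.1).1
  omega

lemma sf_hbud0 (hmono : StrictMono φ)
    (hget : ∀ q, q < ld → φ q < n ∧ c.getD (φ q) false = d.getD q false)
    (hlen2 : n ≤ ld + 3 * k) :
    (USet n ld c d φ).card ≤ 3 * k := by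
  have hdisj : Disjoint (USet n ld c d φ) ((range ld).image φ) := by
    rw [disjoint_right]
    intro z hzi hzf
    obtain ⟨r, hr, hrz⟩ := mem_image.mp hzi
    rw [mem_range] at hr
    exact sf_nimg hget z hzf r hr hrz
  have hsub : (USet n ld c d φ) ∪ ((range ld).image φ) ⊆ range n := by
    intro z hz
    rw [mem_union] at hz
    rw [mem_range]
    rcases hz with hz | hz
    · exact (mem_OSet.mp ((filter_subset _ _) hz)).1
    · obtain ⟨r, hr, hrz⟩ := mem_image.mp hz
      rw [mem_range] at hr
      rw [← hrz]
      exact (hget r hr).1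
  have h1 := card_le_card hsub
  rw [card_union_of_disjoint hdisj, card_image_of_injective _ hmono.injective,
    card_range, card_range] at h1
  omega

lemma sf_decomp (hmono : StrictMono φ)
    (hget : ∀ q, q < ld → φ q < n ∧ c.getD (φ q) false = d.getD q false) (x : ℕ) :
    ((OSet n c).filter (fun i => x ≤ i)).card
      = ((QSet ld d).filter (fun q => x ≤ φ q)).card
        + ((USet n ld c d φ).filter (fun z => x ≤ z)).card := by
  classical
  have hsplit := card_filter_add_card_filter_not
    (s := (OSet n c).filter (fun i => x ≤ i)) (p := fun i => ∃ q ∈ QSet ld d, φ q = i)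
  have hU : (((OSet n c).filter (fun i => x ≤ i)).filter
      (fun i => ¬ ∃ q ∈ QSet ld d, φ q = i)) = (USet n ld c d φ).filter (fun z => x ≤ z) := by
    ext z
    rw [mem_filter, mem_filter, mem_filter, USet, mem_filter]
    constructor
    · rintro ⟨⟨hzO, hxz⟩, hno⟩
      push_neg at hno
      exact ⟨⟨hzO, hno⟩, hxz⟩
    · rintro ⟨⟨hzO, hno⟩, hxz⟩
      refine ⟨⟨hzO, hxz⟩, ?_⟩
      push_neg
      exact hno
  have hM : ((QSet ld d).filter (fun q => x ≤ φ q)).card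
      = (((OSet n c).filter (fun i => x ≤ i)).filter
        (fun i => ∃ q ∈ QSet ld d, φ q = i)).card := by
    apply Finset.card_bij (fun q _ => φ q)
    · intro q hq
      rw [mem_filter] at hq
      rw [mem_filter, mem_filter]
      exact ⟨⟨sf_phi_mem hget q hq.1, hq.2⟩, ⟨q, hq.1, rfl⟩⟩
    · intro q1 h1 q2 h2 heq
      exact hmono.injective heq
    · intro b hb
      rw [mem_filter, mem_filter] at hb
      obtain ⟨⟨hbO, hxb⟩, q, hqQ, hq⟩ := hb
      exact ⟨q, mem_filter.mpr ⟨hqQ, by rw [hq]; exact hxb⟩, hq⟩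
  rw [hU, ← hM] at hsplit
  omega

end Side

theorem dotM_eq (c : List Bool) (e : ℕ) :
    dotM c e = ∑ x ∈ range c.length,
      (x + 1) ^ e * ((OSet c.length c).filter (fun i => x ≤ i)).card := by
  classical
  unfold dotM
  have hIcc : ∀ i : ℕ, ∑ j ∈ Icc 1 (i + 1), j ^ e = ∑ x ∈ range (i + 1), (x + 1) ^ e := by
    intro i
    rw [← Finset.Ico_add_one_right_eq_Icc, Finset.sum_Ico_eq_sum_range]
    apply sum_congr
    · congr 1
    · intro t _
      rw [Nat.add_comm]
  have hcard : ∀ x, ((OSet c.length c).filter (fun i => x ≤ i)).card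
      = ∑ i ∈ range c.length, (if c.getD i false = true ∧ x ≤ i then 1 else 0) := by
    intro x
    rw [OSet, filter_filter, card_filter]
  calc ∑ i ∈ range c.length, (c.getD i false).toNat * ∑ j ∈ Icc 1 (i + 1), j ^ e
      = ∑ i ∈ range c.length, ∑ x ∈ range c.length,
          (if c.getD i false = true ∧ x ≤ i then (x + 1) ^ e else 0) := by
        apply sum_congr rfl
        intro i hi
        rw [mem_range] at hi
        by_cases hb : c.getD i false = true
        · have h1 : ∑ x ∈ range c.length,
              (if c.getD i false = true ∧ x ≤ i then (x + 1) ^ e else 0)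
              = ∑ x ∈ (range c.length).filter (fun x => x ≤ i), (x + 1) ^ e := by
            rw [sum_filter]
            apply sum_congr rfl
            intro x _
            rw [hb]
            simp
          have h2 : (range c.length).filter (fun x => x ≤ i) = range (i + 1) := by
            ext t
            simp only [mem_filter, mem_range]
            omega
          rw [h1, h2, hb, hIcc i]
          simp
        · have hb' : c.getD i false = false := by
            cases h : c.getD i false
            · rfl
            · exact absurd h hb
          rw [hb']
          simp only [Bool.toNat_false, zero_mul]
          symm
          apply sum_eq_zero
          intro x _
          simp
    _ = ∑ x ∈ range c.length, (x + 1) ^ e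
          * ((OSet c.length c).filter (fun i => x ≤ i)).card := by
        rw [sum_comm]
        apply sum_congr rfl
        intro x _
        rw [hcard x, mul_sum]
        apply sum_congr rfl
        intro i _
        rw [mul_ite, mul_one, mul_zero]


/-- If `c, c'` are binary sequences of length `n` in which any two distinct 1-entries are at
distance at least `3k`, `c' ∈ B_{3k}(c)`, and `c · m^{(e)} = c' · m^{(e)}` for all
`e ∈ [0, 6k]`, then `c = c'`. -/
theorem moment_checks_injective_on_R3k (n k : ℕ) (hk : 1 ≤ k) (c c' : List Bool)
    (hc : c.length = n) (hc' : c'.length = n)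
    (hr : ∀ i j : ℕ, i < j → c.getD i false = true → c.getD j false = true → 3 * k ≤ j - i)
    (hr' : ∀ i j : ℕ, i < j → c'.getD i false = true → c'.getD j false = true → 3 * k ≤ j - i)
    (hball : ∃ d : List Bool, d.length = n - 3 * k ∧ d.Sublist c ∧ d.Sublist c')
    (hmom : ∀ e ≤ 6 * k, dotM c e = dotM c' e) :
    c = c' := by
  classical
  obtain ⟨d, hdlen, hdc, hdc'⟩ := hball
  obtain ⟨f1, hf1⟩ := List.sublist_iff_exists_orderEmbedding_getElem?_eq.mp hdc
  obtain ⟨f2, hf2⟩ := List.sublist_iff_exists_orderEmbedding_getElem?_eq.mp hdc'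
  set ld := n - 3 * k with hlddef
  have hldn : ld ≤ n := by omega
  have hlen2 : n ≤ ld + 3 * k := by omega
  set φ : ℕ → ℕ := fun q => f1 q with hφdef
  set ψ : ℕ → ℕ := fun q => f2 q with hψdef
  have hφmono : StrictMono φ := f1.strictMono
  have hψmono : StrictMono ψ := f2.strictMono
  have hget1 : ∀ q, q < ld → φ q < n ∧ c.getD (φ q) false = d.getD q false := by
    intro q hq
    have hqd : q < d.length := by omega
    have h1 := hf1 q
    have hlt : φ q < c.length := by
      by_contra hcn
      push_neg at hcn
      have h2 : (c)[φ q]? = none := List.getElem?_eq_none hcn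
      rw [h2] at h1
      have := List.getElem?_eq_none_iff.mp h1
      omega
    refine ⟨by omega, ?_⟩
    rw [List.getD_eq_getElem?_getD, List.getD_eq_getElem?_getD, h1]
  have hget2 : ∀ q, q < ld → ψ q < n ∧ c'.getD (ψ q) false = d.getD q false := by
    intro q hq
    have hqd : q < d.length := by omega
    have h1 := hf2 q
    have hlt : ψ q < c'.length := by
      by_contra hcn
      push_neg at hcn
      have h2 : c'[(ψ q)]? = none := List.getElem?_eq_none hcn
      rw [h2] at h1
      have := List.getElem?_eq_none_iff.mp h1
      omega
    refine ⟨by omega, ?_⟩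
    rw [List.getD_eq_getElem?_getD, List.getD_eq_getElem?_getD, h1]
  have H0 : ∀ q ∈ QSet ld d, q ≤ φ q ∧ φ q ≤ q + 3 * k ∧ q ≤ ψ q ∧ ψ q ≤ q + 3 * k := by
    intro q hq
    obtain ⟨a1, a2⟩ := sf_h0 hφmono hget1 hlen2 q hq
    obtain ⟨b1, b2⟩ := sf_h0 hψmono hget2 hlen2 q hq
    exact ⟨a1, a2, b1, b2⟩
  have H1 : ∀ q ∈ QSet ld d, ∀ q' ∈ QSet ld d, q < q' →
      φ q + 3 * k ≤ φ q' ∧ ψ q + 3 * k ≤ ψ q' := by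
    intro q hq q' hq' hlt
    exact ⟨sf_h1 hφmono hget1 hr q hq q' hq' hlt, sf_h1 hψmono hget2 hr' q hq q' hq' hlt⟩
  have hg : ∀ x, (((((OSet n c).filter (fun i => x ≤ i)).card : ℤ)
        - (((OSet n c').filter (fun i => x ≤ i)).card : ℤ)))
      = ((((QSet ld d).filter (fun q => x ≤ φ q)).card : ℤ)
        + (((USet n ld c d φ).filter (fun z => x ≤ z)).card : ℤ))
      - ((((QSet ld d).filter (fun q => x ≤ ψ q)).card : ℤ)
        + (((USet n ld c' d ψ).filter (fun z => x ≤ z)).card : ℤ)) := by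
    intro x
    rw [sf_decomp hφmono hget1 x, sf_decomp hψmono hget2 x]
    push_cast
    ring
  have hmomw : ∀ e ≤ 6 * k, ∑ x ∈ range n, ((x : ℤ) + 1) ^ e
      * ((((OSet n c).filter (fun i => x ≤ i)).card : ℤ)
        - (((OSet n c').filter (fun i => x ≤ i)).card : ℤ)) = 0 := by
    intro e he
    have h1 := dotM_eq c e
    have h2 := dotM_eq c' e
    rw [hc] at h1
    rw [hc'] at h2
    have h3 := hmom e he
    have h4 : ∑ x ∈ range n, ((x : ℤ) + 1) ^ e
        * ((((OSet n c).filter (fun i => x ≤ i)).card : ℤ)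
          - (((OSet n c').filter (fun i => x ≤ i)).card : ℤ))
        = (∑ x ∈ range n, (x + 1) ^ e * ((OSet n c).filter (fun i => x ≤ i)).card : ℕ)
          - ((∑ x ∈ range n, (x + 1) ^ e * ((OSet n c').filter (fun i => x ≤ i)).card : ℕ) : ℤ) := by
      push_cast
      rw [← sum_sub_distrib]
      apply sum_congr rfl
      intro x _
      ring
    rw [h4, ← h1, ← h2, h3]
    ring
  have hw0 : ∀ x, x < n → ((((OSet n c).filter (fun i => x ≤ i)).card : ℤ)
      - (((OSet n c').filter (fun i => x ≤ i)).card : ℤ)) = 0 := by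
    apply sign_vanish (D := 6 * k) hmomw
    intro f hm hrg hnz
    by_contra hcon
    push_neg at hcon
    exact no_chain k φ ψ (QSet ld d) (USet n ld c d φ) (USet n ld c' d ψ) _ hg H0 H1
      (sf_htr0 hφmono hget1) (sf_htr0 hψmono hget2)
      (sf_htr hφmono hget1) (sf_htr hψmono hget2)
      (sf_sepU hget1 hr) (sf_sepU hget2 hr')
      (sf_hbud hφmono hget1 hlen2) (sf_hbud hψmono hget2 hlen2)
      (sf_hbud0 hφmono hget1 hlen2) (sf_hbud0 hψmono hget2 hlen2)
      f hm hcon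
  have hwall : ∀ x, ((((OSet n c).filter (fun i => x ≤ i)).card : ℤ)
      - (((OSet n c').filter (fun i => x ≤ i)).card : ℤ)) = 0 := by
    intro x
    rcases lt_or_ge x n with h | h
    · exact hw0 x h
    · have ha : (OSet n c).filter (fun i => x ≤ i) = ∅ := by
        rw [filter_eq_empty_iff]
        intro i hi hxi
        rw [mem_OSet] at hi
        omega
      have hb : (OSet n c').filter (fun i => x ≤ i) = ∅ := by
        rw [filter_eq_empty_iff]
        intro i hi hxi
        rw [mem_OSet] at hi
        omega
      rw [ha, hb]
      simp
  have hkey : ∀ i, i < n → c.getD i false = c'.getD i false := by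
    intro i hi
    have e1 := hwall i
    have e2 := hwall (i + 1)
    have s1 : ((OSet n c).filter (fun j => i ≤ j)).card
        = ((OSet n c).filter (fun j => i + 1 ≤ j)).card + (if i ∈ OSet n c then 1 else 0) := by
      have hsp : (OSet n c).filter (fun j => i ≤ j)
          = ((OSet n c).filter (fun j => i + 1 ≤ j)) ∪ ((OSet n c) ∩ {i}) := by
        ext j
        rw [mem_filter, mem_union, mem_filter, mem_inter, mem_singleton]
        constructor
        · rintro ⟨hj, hij⟩
          rcases eq_or_lt_of_le hij with h | h
          · exact Or.inr ⟨hj, h.symm⟩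
          · exact Or.inl ⟨hj, h⟩
        · rintro (⟨hj, hij⟩ | ⟨hj, rfl⟩)
          · exact ⟨hj, by omega⟩
          · exact ⟨hj, le_refl _⟩
      rw [hsp, card_union_of_disjoint]
      · congr 1
        by_cases h : i ∈ OSet n c
        · rw [inter_comm, singleton_inter_of_mem h, card_singleton, if_pos h]
        · rw [inter_comm, singleton_inter_of_notMem h, card_empty, if_neg h]
      · rw [disjoint_left]
        rintro j hj1 hj2
        rw [mem_filter] at hj1
        rw [mem_inter, mem_singleton] at hj2
        omega
    have s2 : ((OSet n c').filter (fun j => i ≤ j)).card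
        = ((OSet n c').filter (fun j => i + 1 ≤ j)).card + (if i ∈ OSet n c' then 1 else 0) := by
      have hsp : (OSet n c').filter (fun j => i ≤ j)
          = ((OSet n c').filter (fun j => i + 1 ≤ j)) ∪ ((OSet n c') ∩ {i}) := by
        ext j
        rw [mem_filter, mem_union, mem_filter, mem_inter, mem_singleton]
        constructor
        · rintro ⟨hj, hij⟩
          rcases eq_or_lt_of_le hij with h | h
          · exact Or.inr ⟨hj, h.symm⟩
          · exact Or.inl ⟨hj, h⟩
        · rintro (⟨hj, hij⟩ | ⟨hj, rfl⟩)
          · exact ⟨hj, by omega⟩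
          · exact ⟨hj, le_refl _⟩
      rw [hsp, card_union_of_disjoint]
      · congr 1
        by_cases h : i ∈ OSet n c'
        · rw [inter_comm, singleton_inter_of_mem h, card_singleton, if_pos h]
        · rw [inter_comm, singleton_inter_of_notMem h, card_empty, if_neg h]
      · rw [disjoint_left]
        rintro j hj1 hj2
        rw [mem_filter] at hj1
        rw [mem_inter, mem_singleton] at hj2
        omega
    cases hb1 : c.getD i false <;> cases hb2 : c'.getD i false
    · rfl
    · exfalso
      have m1 : i ∉ OSet n c := by
        rw [mem_OSet]
        rintro ⟨-, hcc⟩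
        rw [hb1] at hcc
        exact Bool.noConfusion hcc
      have m2 : i ∈ OSet n c' := mem_OSet.mpr ⟨hi, hb2⟩
      rw [if_neg m1] at s1
      rw [if_pos m2] at s2
      omega
    · exfalso
      have m1 : i ∈ OSet n c := mem_OSet.mpr ⟨hi, hb1⟩
      have m2 : i ∉ OSet n c' := by
        rw [mem_OSet]
        rintro ⟨-, hcc⟩
        rw [hb2] at hcc
        exact Bool.noConfusion hcc
      rw [if_pos m1] at s1
      rw [if_neg m2] at s2
      omega
    · rfl
  apply List.ext_getElem (by omega : c.length = c'.length)
  intro i h1 h2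
  have h3 := hkey i (by omega)
  rwa [List.getD_eq_getElem c false h1, List.getD_eq_getElem c' false h2] at h3
end

section
/- Let c, c' ∈ {0,1}^n both lie in R_{3k} (any two 1-entries are at distance at least 3k) and suppose c' ∈ B_{3k}(c) with common subsequence obtained by deleting index sets δ, δ' of size 3k from c, c' respectively. Let S_1^c (resp. S_2^c) be the surviving 1-positions of c (resp. c'). Then for every i ∈ [1,n], −1 ≤ |S_1^c ∩ [i,n]| − |S_2^c ∩ [i,n]| ≤ 1. -/
/-- The sequence obtained from `c` by deleting the entries at the (1-based) positions in `δ`. -/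
def delIdx (c : List Bool) (δ : Finset ℕ) : List Bool :=
  ((List.range c.length).filter fun i => i + 1 ∉ δ).map fun i => c.getD i false

/-- `|S ∩ [i, n]|` where `S` is the set of surviving 1-positions of `c` (1-based positions `j`
with `c_j = 1` and `j ∉ δ`). -/
def survOnesFrom (c : List Bool) (δ : Finset ℕ) (i : ℕ) : ℕ :=
  ((Finset.Icc i c.length).filter fun j => c.getD (j - 1) false = true ∧ j ∉ δ).card

private lemma bridge (p : ℕ → Prop) [DecidablePred p] (n : ℕ) :
    ((Finset.range n).filter p).card = ((List.range n).filter (fun m => decide (p m))).length := by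
  induction n with
  | zero => simp
  | succ n ih =>
    rw [Finset.range_add_one, List.range_succ, Finset.filter_insert, List.filter_append]
    by_cases h : p n
    · rw [if_pos h, Finset.card_insert_of_notMem (by simp)]
      simp [h, ih]
    · rw [if_neg h]
      simp [h, ih]

private lemma flt_aux (P : ℕ → Bool) (n r : ℕ)
    (hr : r < ((List.range n).filter P).length) :
    ((List.range (((List.range n).filter P)[r] + 1)).filter P).length = r + 1 := by
  set L := (List.range n).filter P with hL
  set j := L[r] with hj
  have hmem : j ∈ L := List.getElem_mem _
  have hPj : P j = true := List.of_mem_filter hmem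
  have hjn : j < n := List.mem_range.mp (List.mem_of_mem_filter hmem)
  have hsplit : List.range n = List.range (j+1) ++ (List.range (n - (j+1))).map ((j+1) + ·) := by
    rw [← List.range_add]; congr 1; omega
  have hA : (List.range (j+1)).filter P = (List.range j).filter P ++ [j] := by
    rw [List.range_succ, List.filter_append]
    simp [hPj]
  set X := (List.range j).filter P with hX
  have hL2 : L = X ++ j :: ((List.range (n - (j+1))).map ((j+1) + ·)).filter P := by
    rw [hL, hsplit, List.filter_append, hA]
    simp
  have hXlen : X.length < L.length := by
    rw [hL2]; simp
  have hgetX : L[X.length]'hXlen = j := by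
    rw [List.getElem_of_eq hL2 hXlen, List.getElem_append_right (le_refl X.length)]
    simp
  have hnd : L.Nodup := List.nodup_range.filter _
  have hrX : r = X.length := by
    rw [← hnd.getElem_inj_iff (hi := hr) (hj := hXlen), hgetX, ← hj]
  rw [hA]
  simp [hrX]

private lemma le_getElem (P : ℕ → Bool) (n r : ℕ)
    (hr : r < ((List.range n).filter P).length) :
    r ≤ ((List.range n).filter P)[r] := by
  have h := flt_aux P n r hr
  have h2 := List.length_filter_le P (List.range (((List.range n).filter P)[r] + 1))
  rw [List.length_range] at h2
  omega

private lemma getElem_le (δ : Finset ℕ) (n r : ℕ)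
    (hr : r < ((List.range n).filter (fun m => decide (m+1 ∉ δ))).length) :
    ((List.range n).filter (fun m => decide (m+1 ∉ δ)))[r] ≤ r + δ.card := by
  set L := (List.range n).filter (fun m => decide (m+1 ∉ δ)) with hL
  set j := L[r] with hj
  have h1 := flt_aux (fun m => decide (m+1 ∉ δ)) n r hr
  have h2 : ((Finset.range (j+1)).filter (fun m => m+1 ∉ δ)).card = r + 1 := by
    rw [bridge]; exact h1
  have h3 : ((Finset.range (j+1)).filter (fun m => ¬ (m+1 ∉ δ))).card ≤ δ.card := by
    apply Finset.card_le_card_of_injOn (fun m => m + 1)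
    · intro m hm
      simp only [Finset.mem_coe, Finset.mem_filter, not_not] at hm
      exact hm.2
    · intro a _ b _ h
      simpa using h
  have h4 := Finset.card_filter_add_card_filter_not
    (s := Finset.range (j+1)) (fun m => m+1 ∉ δ)
  rw [Finset.card_range] at h4
  omega

private lemma card_surv (P Q : ℕ → Prop) [DecidablePred P] [DecidablePred Q] (n : ℕ) :
    ((Finset.range n).filter fun m => P m ∧ Q m).card =
    ((Finset.range ((List.range n).filter fun m => decide (P m)).length).filter
      fun r => Q (((List.range n).filter fun m => decide (P m)).getD r 0)).card := by
  set L := (List.range n).filter fun m => decide (P m) with hL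
  have hnd : L.Nodup := List.nodup_range.filter _
  apply Finset.card_bij' (fun m _ => L.idxOf m) (fun r _ => L.getD r 0)
  · intro m hm
    simp only [Finset.mem_filter, Finset.mem_range] at hm ⊢
    have hmL : m ∈ L := by
      rw [hL, List.mem_filter]
      exact ⟨List.mem_range.mpr hm.1, by simpa using hm.2.1⟩
    have hidx : L.idxOf m < L.length := List.idxOf_lt_length_iff.mpr hmL
    refine ⟨hidx, ?_⟩
    rw [List.getD_eq_getElem L 0 hidx, List.getElem_idxOf hidx]
    exact hm.2.2
  · intro r hrr
    simp only [Finset.mem_filter, Finset.mem_range] at hrr ⊢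
    obtain ⟨hr, hQ⟩ := hrr
    rw [List.getD_eq_getElem L 0 hr] at hQ ⊢
    have hmem : L[r] ∈ L := List.getElem_mem _
    have hrange : L[r] < n := List.mem_range.mp (List.mem_of_mem_filter hmem)
    have hPm : P (L[r]) := by simpa using List.of_mem_filter hmem
    exact ⟨hrange, hPm, hQ⟩
  · intro m hm
    simp only [Finset.mem_filter, Finset.mem_range] at hm
    have hmL : m ∈ L := by
      rw [hL, List.mem_filter]
      exact ⟨List.mem_range.mpr hm.1, by simpa using hm.2.1⟩
    have hidx : L.idxOf m < L.length := List.idxOf_lt_length_iff.mpr hmL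
    rw [List.getD_eq_getElem L 0 hidx, List.getElem_idxOf hidx]
  · intro r hrr
    simp only [Finset.mem_filter, Finset.mem_range] at hrr
    obtain ⟨hr, _⟩ := hrr
    rw [List.getD_eq_getElem L 0 hr]
    have hidx : L.idxOf (L[r]) < L.length :=
      List.idxOf_lt_length_iff.mpr (List.getElem_mem _)
    have := List.getElem_idxOf (x := L[r]) (xs := L) hidx
    rwa [hnd.getElem_inj_iff] at this

private lemma survOnesFrom_eq (c : List Bool) (δ : Finset ℕ) (i : ℕ) (hi : 1 ≤ i) :
    survOnesFrom c δ i =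
      ((Finset.range c.length).filter
        fun m => (m+1 ∉ δ) ∧ (c.getD m false = true ∧ i ≤ m+1)).card := by
  unfold survOnesFrom
  apply Finset.card_bij' (fun j _ => j - 1) (fun m _ => m + 1)
  · intro j hj
    simp only [Finset.mem_filter, Finset.mem_Icc] at hj
    show j - 1 + 1 = j
    omega
  · intro m _
    show m + 1 - 1 = m
    omega
  · intro j hj
    simp only [Finset.mem_filter, Finset.mem_Icc, Finset.mem_range] at hj ⊢
    obtain ⟨⟨h1, h2⟩, h3, h4⟩ := hj
    have hj1 : j - 1 + 1 = j := by omega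
    rw [hj1]
    exact ⟨by omega, h4, h3, by omega⟩
  · intro m hm
    simp only [Finset.mem_filter, Finset.mem_Icc, Finset.mem_range] at hm ⊢
    obtain ⟨h1, h2, h3, h4⟩ := hm
    have hm1 : m + 1 - 1 = m := by omega
    rw [hm1]
    exact ⟨⟨by omega, by omega⟩, h3, h2⟩

private lemma aux_main (n k : ℕ) (c c' : List Bool)
    (hc : c.length = n) (hc' : c'.length = n)
    (hr : ∀ i j : ℕ, i < j → c.getD i false = true → c.getD j false = true → 3 * k ≤ j - i)
    (δ δ' : Finset ℕ)
    (hcard : δ.card = 3 * k) (hcard' : δ'.card = 3 * k)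
    (hdel : delIdx c δ = delIdx c' δ')
    (i : ℕ) (hi1 : 1 ≤ i) :
    survOnesFrom c δ i ≤ survOnesFrom c' δ' i + 1 := by
  classical
  set L := (List.range c.length).filter (fun m => decide (m+1 ∉ δ)) with hLdef
  set L' := (List.range c'.length).filter (fun m => decide (m+1 ∉ δ')) with hL'def
  have hdel2 : L.map (fun m => c.getD m false) = L'.map (fun m => c'.getD m false) := hdel
  have hlen : L.length = L'.length := by
    have := congrArg List.length hdel2
    simpa using this
  have hval : ∀ r (h : r < L.length),
      c.getD (L[r]) false = c'.getD (L'[r]'(hlen ▸ h)) false := by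
    intro r h
    have h2 : (L.map (fun m => c.getD m false))[r]'(by simpa using h) =
        (L'.map (fun m => c'.getD m false))[r]'(by simp; omega) :=
      List.getElem_of_eq hdel2 _
    simpa using h2
  have hsurv : survOnesFrom c δ i =
      ((Finset.range L.length).filter
        fun r => c.getD (L.getD r 0) false = true ∧ i ≤ L.getD r 0 + 1).card := by
    rw [survOnesFrom_eq c δ i hi1]
    exact card_surv (fun m => m+1 ∉ δ) (fun m => c.getD m false = true ∧ i ≤ m+1) c.length
  have hsurv' : survOnesFrom c' δ' i =
      ((Finset.range L.length).filter
        fun r => c'.getD (L'.getD r 0) false = true ∧ i ≤ L'.getD r 0 + 1).card := by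
    rw [survOnesFrom_eq c' δ' i hi1, hlen]
    exact card_surv (fun m => m+1 ∉ δ') (fun m => c'.getD m false = true ∧ i ≤ m+1) c'.length
  set A := (Finset.range L.length).filter
    (fun r => c.getD (L.getD r 0) false = true ∧ i ≤ L.getD r 0 + 1) with hA
  set B := (Finset.range L.length).filter
    (fun r => c'.getD (L'.getD r 0) false = true ∧ i ≤ L'.getD r 0 + 1) with hB
  have hpair : List.Pairwise (· < ·) L := List.Pairwise.filter _ List.pairwise_lt_range
  have key : ∀ r s, r < s → r ∈ A \ B → s ∈ A \ B → False := by
    intro r s hrs hrAB hsAB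
    rw [Finset.mem_sdiff, hA, hB, Finset.mem_filter, Finset.mem_filter,
      Finset.mem_range] at hrAB hsAB
    obtain ⟨⟨hrlen, hrQ⟩, hrB⟩ := hrAB
    obtain ⟨⟨hslen, hsQ⟩, hsB⟩ := hsAB
    rw [List.getD_eq_getElem L 0 hrlen] at hrQ
    rw [List.getD_eq_getElem L 0 hslen] at hsQ
    have hrlen' : r < L'.length := hlen ▸ hrlen
    have hslen' : s < L'.length := hlen ▸ hslen
    -- values in c' are also 1
    have hvr : c'.getD (L'[r]) false = true := (hval r hrlen) ▸ hrQ.1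
    have hvs : c'.getD (L'[s]) false = true := (hval s hslen) ▸ hsQ.1
    -- not in B means i > L'[..] + 1
    have hriB : ¬ (i ≤ L'[r] + 1) := by
      intro hcon
      exact hrB ⟨hrlen, by
        rw [List.getD_eq_getElem L' 0 hrlen']; exact ⟨hvr, hcon⟩⟩
    have hsiB : ¬ (i ≤ L'[s] + 1) := by
      intro hcon
      exact hsB ⟨hslen, by
        rw [List.getD_eq_getElem L' 0 hslen']; exact ⟨hvs, hcon⟩⟩
    have hlt : L[r] < L[s] := List.pairwise_iff_getElem.mp hpair r s hrlen hslen hrs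
    have hone : 3 * k ≤ L[s] - L[r] := hr (L[r]) (L[s]) hlt hrQ.1 hsQ.1
    have hub : L[s] ≤ s + δ.card := getElem_le δ c.length s hslen
    have hlb : s ≤ L'[s] := le_getElem _ c'.length s hslen'
    have hir : i ≤ L[r] + 1 := hrQ.2
    omega
  have hAB : (A \ B).card ≤ 1 := by
    rw [Finset.card_le_one]
    intro a ha b hb
    by_contra hne
    rcases Nat.lt_trichotomy a b with h | h | h
    · exact key a b h ha hb
    · exact hne h
    · exact key b a h hb ha
  calc survOnesFrom c δ i = A.card := hsurv
    _ ≤ (A \ B).card + B.card := Finset.card_le_card_sdiff_add_card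
    _ ≤ 1 + B.card := by omega
    _ = survOnesFrom c' δ' i + 1 := by rw [hsurv']; omega

/-- If `c, c' ∈ R_{3k}` share a common subsequence obtained by deleting the index sets
`δ, δ'` of size `3k`, then for every `i ∈ [1, n]`,
`-1 ≤ |S_1^c ∩ [i,n]| − |S_2^c ∩ [i,n]| ≤ 1`. -/
theorem surviving_ones_diff_bound (n k : ℕ) (hk : 1 ≤ k) (c c' : List Bool)
    (hc : c.length = n) (hc' : c'.length = n)
    (hr : ∀ i j : ℕ, i < j → c.getD i false = true → c.getD j false = true → 3 * k ≤ j - i)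
    (hr' : ∀ i j : ℕ, i < j → c'.getD i false = true → c'.getD j false = true → 3 * k ≤ j - i)
    (δ δ' : Finset ℕ) (hδ : δ ⊆ Finset.Icc 1 n) (hδ' : δ' ⊆ Finset.Icc 1 n)
    (hcard : δ.card = 3 * k) (hcard' : δ'.card = 3 * k)
    (hdel : delIdx c δ = delIdx c' δ') :
    ∀ i, 1 ≤ i → i ≤ n →
      -1 ≤ (survOnesFrom c δ i : ℤ) - (survOnesFrom c' δ' i : ℤ) ∧
      (survOnesFrom c δ i : ℤ) - (survOnesFrom c' δ' i : ℤ) ≤ 1 := by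
  intro i hi1 hi2
  have h1 := aux_main n k c c' hc hc' hr δ δ' hcard hcard' hdel i hi1
  have h2 := aux_main n k c' c hc' hc hr' δ' δ hcard' hcard hdel.symm i hi1
  constructor <;> omega
end

section
/- Under the same setup (c, c' ∈ R_{3k}, common subsequence after deleting index sets δ, δ' of size 3k), for each interval (p_j, p_{j+1}] determined by consecutive elements of δ ∪ δ' (with p_0 = 0, p_{last} = n), the quantity |S_1^c ∩ [i,n]| − |S_2^c ∩ [i,n]| does not change sign as i ranges over (p_j, p_{j+1}]: either it is ≥ 0 for all such i or ≤ 0 for all such i. -/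

lemma card_filter_lt_le (δ : Finset ℕ) (h0 : 0 ∉ δ) (r : ℕ) :
    (δ.filter (· < r + 1)).card ≤ r := by
  have : δ.filter (· < r + 1) ⊆ Finset.Icc 1 r := by
    intro m hm
    simp only [Finset.mem_filter] at hm
    rcases hm with ⟨hm, hlt⟩
    have : m ≠ 0 := fun h => h0 (h ▸ hm)
    exact Finset.mem_Icc.2 ⟨Nat.one_le_iff_ne_zero.2 this, by omega⟩
  calc (δ.filter (· < r + 1)).card ≤ (Finset.Icc 1 r).card := Finset.card_le_card this
    _ = r := by rw [Nat.card_Icc]; omega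

lemma len_filter_range (δ : Finset ℕ) (h0 : 0 ∉ δ) :
    ∀ r, ((List.range r).filter fun i => i + 1 ∉ δ).length
      = r - (δ.filter (· < r + 1)).card := by
  intro r
  induction r with
  | zero => simp
  | succ r ih =>
    rw [List.range_succ, List.filter_append, List.length_append, ih]
    have ht := card_filter_lt_le δ h0 r
    by_cases hmem : r + 1 ∈ δ
    · have : δ.filter (· < r + 2) = insert (r+1) (δ.filter (· < r + 1)) := by
        ext m
        simp only [Finset.mem_filter, Finset.mem_insert]
        constructor
        · rintro ⟨hm, hlt⟩
          by_cases h : m = r + 1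
          · exact Or.inl h
          · exact Or.inr ⟨hm, by omega⟩
        · rintro (h | ⟨hm, hlt⟩)
          · exact ⟨h ▸ hmem, by omega⟩
          · exact ⟨hm, by omega⟩
      rw [this, Finset.card_insert_of_notMem (by simp)]
      simp only [List.filter_cons, List.filter_nil]
      rw [if_neg (by simpa using hmem)]
      simp only [List.length_nil, List.length_cons]; omega
    · have : δ.filter (· < r + 2) = δ.filter (· < r + 1) := by
        ext m
        simp only [Finset.mem_filter]
        constructor
        · rintro ⟨hm, hlt⟩
          refine ⟨hm, ?_⟩
          by_contra h
          have : m = r + 1 := by omega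
          exact hmem (this ▸ hm)
        · rintro ⟨hm, hlt⟩; exact ⟨hm, by omega⟩
      rw [this]
      simp only [List.filter_cons, List.filter_nil]
      rw [if_pos (by simpa using hmem)]
      simp only [List.length_nil, List.length_cons]; omega

lemma get_filter_range (q : ℕ → Bool) :
    ∀ (n j : ℕ), j < n → q j = true →
      ((List.range n).filter q)[((List.range j).filter q).length]? = some j := by
  intro n
  induction n with
  | zero => intro j h; omega
  | succ n ih =>
    intro j hj hq
    rw [List.range_succ, List.filter_append]
    by_cases h : j < n
    · have hih := ih j h hq
      have hlt : ((List.range j).filter q).length < ((List.range n).filter q).length := by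
        by_contra hge
        rw [List.getElem?_eq_none (by omega)] at hih
        exact absurd hih (by simp)
      rw [List.getElem?_append_left hlt, hih]
    · have hjn : j = n := by omega
      subst hjn
      have : (List.filter q [j]) = [j] := by simp [hq]
      rw [this, List.getElem?_concat_length]

lemma survOnesFrom_zero (c : List Bool) (δ : Finset ℕ) (i : ℕ) (h : c.length < i) :
    survOnesFrom c δ i = 0 := by
  unfold survOnesFrom
  rw [Finset.Icc_eq_empty (by omega)]
  simp

lemma survOnesFrom_rec (c : List Bool) (δ : Finset ℕ) (m : ℕ) (h1 : m ≤ c.length) :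
    survOnesFrom c δ m
      = (if c.getD (m - 1) false = true ∧ m ∉ δ then 1 else 0) + survOnesFrom c δ (m + 1) := by
  unfold survOnesFrom
  rw [show Finset.Icc m c.length = insert m (Finset.Icc (m+1) c.length) by
    ext x; simp [Finset.mem_Icc]; omega]
  rw [Finset.filter_insert]
  by_cases hc : c.getD (m - 1) false = true ∧ m ∉ δ
  · rw [if_pos hc, if_pos hc, Finset.card_insert_of_notMem (by simp)]; omega
  · rw [if_neg hc, if_neg hc]; omega

lemma survOnesFrom_antitone (c : List Bool) (δ : Finset ℕ) (m m' : ℕ) (h : m ≤ m') :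
    survOnesFrom c δ m' ≤ survOnesFrom c δ m :=
  Finset.card_le_card (Finset.filter_subset_filter _ (Finset.Icc_subset_Icc_left h))

lemma delIdx_length (c : List Bool) (δ : Finset ℕ) (hδ : δ ⊆ Finset.Icc 1 c.length) :
    (delIdx c δ).length = c.length - δ.card := by
  have h0 : 0 ∉ δ := fun h => by simpa using hδ h
  unfold delIdx
  rw [List.length_map, len_filter_range δ h0]
  congr 1
  rw [Finset.filter_eq_self.2 (fun m hm => by
    have := Finset.mem_Icc.1 (hδ hm); omega)]

lemma bridge_s10 (c : List Bool) (δ : Finset ℕ) (hδ : δ ⊆ Finset.Icc 1 c.length) :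
    ∀ i, 1 ≤ i →
      survOnesFrom c δ i = survOnesFrom (delIdx c δ) ∅ (i - (δ.filter (· < i)).card) := by
  have h0 : 0 ∉ δ := fun h => by simpa using hδ h
  have hcard : δ.card ≤ c.length := by
    calc δ.card ≤ (Finset.Icc 1 c.length).card := Finset.card_le_card hδ
      _ = c.length := by rw [Nat.card_Icc]; omega
  have lenD : (delIdx c δ).length = c.length - δ.card := delIdx_length c δ hδ
  have hbase : ∀ i, c.length < i →
      survOnesFrom c δ i = survOnesFrom (delIdx c δ) ∅ (i - (δ.filter (· < i)).card) := by
    intro i hi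
    have hfull : δ.filter (· < i) = δ := Finset.filter_eq_self.2 (fun m hm => by
      have := Finset.mem_Icc.1 (hδ hm); omega)
    rw [survOnesFrom_zero c δ i hi, hfull,
      survOnesFrom_zero (delIdx c δ) ∅ (i - δ.card) (by omega)]
  have key : ∀ d i, 1 ≤ i → c.length + 1 ≤ i + d →
      survOnesFrom c δ i = survOnesFrom (delIdx c δ) ∅ (i - (δ.filter (· < i)).card) := by
    intro d
    induction d with
    | zero => intro i h1 h2; exact hbase i (by omega)
    | succ d ih =>
      intro i h1 h2
      by_cases hile : i ≤ c.length
      swap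
      · exact hbase i (by omega)
      set t := (δ.filter (· < i)).card with ht
      have htle : t ≤ i - 1 := by
        have := card_filter_lt_le δ h0 (i - 1)
        rwa [show i - 1 + 1 = i by omega] at this
      have hih := ih (i + 1) (by omega) (by omega)
      rw [survOnesFrom_rec c δ i hile, hih]
      by_cases hmem : i ∈ δ
      · have hins : δ.filter (· < i + 1) = insert i (δ.filter (· < i)) := by
          ext m
          simp only [Finset.mem_filter, Finset.mem_insert]
          constructor
          · rintro ⟨hm, hlt⟩
            by_cases h : m = i
            · exact Or.inl h
            · exact Or.inr ⟨hm, by omega⟩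
          · rintro (h | ⟨hm, hlt⟩)
            · exact ⟨h ▸ hmem, by omega⟩
            · exact ⟨hm, by omega⟩
        rw [if_neg (by tauto), hins, Finset.card_insert_of_notMem (by simp)]
        rw [show i + 1 - (t + 1) = i - t from by omega]
        omega
      · have hsame : δ.filter (· < i + 1) = δ.filter (· < i) := by
          ext m
          simp only [Finset.mem_filter]
          constructor
          · rintro ⟨hm, hlt⟩
            refine ⟨hm, ?_⟩
            by_contra h
            have : m = i := by omega
            exact hmem (this ▸ hm)
          · rintro ⟨hm, hlt⟩; exact ⟨hm, by omega⟩
        rw [hsame, ← ht]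
        set m := i - t with hm
        have hm1 : 1 ≤ m := by omega
        have hs : (δ.filter (fun x => ¬ x < i)).card ≤ c.length - i := by
          have hsub : δ.filter (fun x => ¬ x < i) ⊆ Finset.Icc (i+1) c.length := by
            intro x hx
            simp only [Finset.mem_filter] at hx
            rcases hx with ⟨hx, hge⟩
            have hxi := Finset.mem_Icc.1 (hδ hx)
            have : x ≠ i := fun h => hmem (h ▸ hx)
            exact Finset.mem_Icc.2 ⟨by omega, hxi.2⟩
          calc (δ.filter (fun x => ¬ x < i)).card ≤ (Finset.Icc (i+1) c.length).card :=
              Finset.card_le_card hsub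
            _ = c.length - i := by rw [Nat.card_Icc]; omega
        have hsplit : t + (δ.filter (fun x => ¬ x < i)).card = δ.card := by
          rw [ht]; exact Finset.card_filter_add_card_filter_not _
        have hmle : m ≤ (delIdx c δ).length := by omega
        rw [survOnesFrom_rec (delIdx c δ) ∅ m hmle]
        have hvq : (fun i => decide (i + 1 ∉ δ)) (i - 1) = true := by
          simp only [decide_eq_true_eq]
          rw [show i - 1 + 1 = i from by omega]
          exact hmem
        have hidx : ((List.range (i-1)).filter fun x => x + 1 ∉ δ).length = m - 1 := by
          rw [len_filter_range δ h0 (i-1), show i - 1 + 1 = i from by omega, ← ht]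
          omega
        have hget : ((List.range c.length).filter fun x => x + 1 ∉ δ)[m - 1]? = some (i - 1) := by
          rw [← hidx]
          exact get_filter_range _ c.length (i-1) (by omega) hvq
        have hval : (delIdx c δ).getD (m - 1) false = c.getD (i - 1) false := by
          unfold delIdx
          rw [List.getD_eq_getElem?_getD, List.getElem?_map, hget]
          rfl
        rw [hval]
        simp only [Finset.notMem_empty, not_false_iff, and_true, hmem]
        rw [show i + 1 - t = m + 1 from by omega]
  intro i h1
  rcases Nat.lt_or_ge (c.length + 1) (i + (c.length + 1)) with h | h
  · exact key (c.length + 1) i h1 (by omega)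
  · exact key (c.length + 1) i h1 (by omega)

/-- Under the same setup as the previous statement, on each interval `(a, b]` whose interior
contains no element of `δ ∪ δ'` (covering exactly the intervals determined by consecutive
elements of `δ ∪ δ'` together with the sentinels `0` and `n`), the quantity
`|S_1^c ∩ [i,n]| − |S_2^c ∩ [i,n]|` does not change sign. -/
theorem surviving_ones_diff_sign_constant (n k : ℕ) (hk : 1 ≤ k) (c c' : List Bool)
    (hc : c.length = n) (hc' : c'.length = n)
    (hr : ∀ i j : ℕ, i < j → c.getD i false = true → c.getD j false = true → 3 * k ≤ j - i)
    (hr' : ∀ i j : ℕ, i < j → c'.getD i false = true → c'.getD j false = true → 3 * k ≤ j - i)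
    (δ δ' : Finset ℕ) (hδ : δ ⊆ Finset.Icc 1 n) (hδ' : δ' ⊆ Finset.Icc 1 n)
    (hcard : δ.card = 3 * k) (hcard' : δ'.card = 3 * k)
    (hdel : delIdx c δ = delIdx c' δ') :
    ∀ a b : ℕ, b ≤ n → (∀ m ∈ δ ∪ δ', ¬(a < m ∧ m < b)) →
      (∀ i, a < i → i ≤ b →
        0 ≤ (survOnesFrom c δ i : ℤ) - (survOnesFrom c' δ' i : ℤ)) ∨
      (∀ i, a < i → i ≤ b →
        (survOnesFrom c δ i : ℤ) - (survOnesFrom c' δ' i : ℤ) ≤ 0) := by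
  intro a b hb hgap
  have hδc : δ ⊆ Finset.Icc 1 c.length := by rw [hc]; exact hδ
  have hδc' : δ' ⊆ Finset.Icc 1 c'.length := by rw [hc']; exact hδ'
  have hfilt : ∀ i, a < i → i ≤ b → δ.filter (· < i) = δ.filter (· < a + 1) := by
    intro i hi hib
    ext m
    simp only [Finset.mem_filter]
    constructor
    · rintro ⟨hm, hlt⟩
      refine ⟨hm, ?_⟩
      by_contra h
      exact hgap m (Finset.mem_union_left _ hm) ⟨by omega, by omega⟩
    · rintro ⟨hm, hlt⟩; exact ⟨hm, by omega⟩
  have hfilt' : ∀ i, a < i → i ≤ b → δ'.filter (· < i) = δ'.filter (· < a + 1) := by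
    intro i hi hib
    ext m
    simp only [Finset.mem_filter]
    constructor
    · rintro ⟨hm, hlt⟩
      refine ⟨hm, ?_⟩
      by_contra h
      exact hgap m (Finset.mem_union_right _ hm) ⟨by omega, by omega⟩
    · rintro ⟨hm, hlt⟩; exact ⟨hm, by omega⟩
  set tA := (δ.filter (· < a + 1)).card with htA
  set tA' := (δ'.filter (· < a + 1)).card with htA'
  have hval : ∀ i, a < i → i ≤ b →
      survOnesFrom c δ i = survOnesFrom (delIdx c δ) ∅ (i - tA) := by
    intro i hi hib
    rw [bridge_s10 c δ hδc i (by omega), hfilt i hi hib]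
  have hval' : ∀ i, a < i → i ≤ b →
      survOnesFrom c' δ' i = survOnesFrom (delIdx c δ) ∅ (i - tA') := by
    intro i hi hib
    rw [bridge_s10 c' δ' hδc' i (by omega), hfilt' i hi hib, hdel]
  rcases le_total tA tA' with h | h
  · right
    intro i hi hib
    rw [hval i hi hib, hval' i hi hib]
    have := survOnesFrom_antitone (delIdx c δ) ∅ (i - tA') (i - tA) (Nat.sub_le_sub_left h i)
    omega
  · left
    intro i hi hib
    rw [hval i hi hib, hval' i hi hib]
    have := survOnesFrom_antitone (delIdx c δ) ∅ (i - tA) (i - tA') (Nat.sub_le_sub_left h i)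
    omega
end

section
/- Every binary sequence b of length B = (⌈log k⌉+5)·2^{⌈log k⌉+9}·⌈log n⌉ containing no run of ⌈log k⌉+5 consecutive 1's can be injectively encoded into a binary sequence of length B − ⌈log n⌉ − 2⌈log k⌉ − 12; equivalently, the number of such sequences b is at most 2^{B − ⌈log n⌉ − 2⌈log k⌉ − 12}. -/
/-- A run of `⌈log k⌉ + 5` consecutive 1's starts at (0-based) index `j` of `b`. -/
def runAt (k : ℕ) (b : List Bool) (j : ℕ) : Prop :=
  ∀ t ∈ Finset.range (Nat.clog 2 k + 5), b.getD (j + t) false = true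

lemma aux1 (p n : ℕ) : p^(n+1) + (n+1) * p^n ≤ (p+1)^(n+1) := by
  induction n with
  | zero => simp
  | succ n ih =>
    have h : (p+1)^(n+2) = (p+1) * (p+1)^(n+1) := by ring
    have e1 : p^(n+1) = p^n * p := pow_succ p n
    have e2 : p^(n+2) = p^n * p * p := by rw [← e1]; exact pow_succ p (n+1)
    calc p^(n+2) + (n+2) * p^(n+1)
        ≤ (p+1) * (p^(n+1) + (n+1) * p^n) := by rw [e1, e2]; ring_nf; nlinarith [Nat.zero_le (p^n), Nat.zero_le (p^n * n)]
      _ ≤ (p+1) * (p+1)^(n+1) := Nat.mul_le_mul_left _ ih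
      _ = (p+1)^(n+2) := h.symm

lemma aux2 (m : ℕ) (hm : 1 ≤ m) : 2 * (m-1)^m ≤ m^m := by
  obtain ⟨p, rfl⟩ : ∃ p, m = p + 1 := ⟨m-1, by omega⟩
  simp only [Nat.add_sub_cancel]
  have h1 := aux1 p p
  have e : p^(p+1) = p^p * p := pow_succ p p
  have h2 : p * p^p ≤ (p+1) * p^p := Nat.mul_le_mul_right _ (by omega)
  nlinarith

lemma aux3 (L : ℕ) (hL : 1 ≤ L) : (2^L - 1)^(16 * 2^L) ≤ 2^(L * (16 * 2^L) - 16) := by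
  have hm : 1 ≤ 2^L := Nat.one_le_two_pow
  have h1 : 2 * (2^L - 1)^(2^L) ≤ (2^L)^(2^L) := aux2 _ hm
  have hLL : 1 ≤ L * 2^L := Nat.one_le_iff_ne_zero.2 (by positivity)
  have h2 : (2^L)^(2^L) = 2 * 2^(L * 2^L - 1) := by
    rw [← pow_mul, ← pow_succ']
    congr 1
    omega
  have h3 : (2^L - 1)^(2^L) ≤ 2^(L * 2^L - 1) := by omega
  calc (2 ^ L - 1) ^ (16 * 2 ^ L) = ((2^L - 1)^(2^L))^16 := by rw [← pow_mul]; ring_nf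
    _ ≤ (2^(L * 2^L - 1))^16 := Nat.pow_le_pow_left h3 16
    _ = 2^(L * (16 * 2^L) - 16) := by rw [← pow_mul]; congr 1; cases' Nat.exists_eq_add_of_le hLL with d hd; rw [hd]; ring_nf; omega

lemma card_blocks (L N : ℕ) :
    Nat.card (Fin N → {g : Fin L → Bool // g ≠ fun _ => true}) = (2^L - 1)^N := by
  rw [Nat.card_eq_fintype_card, Fintype.card_fun]
  congr 1
  · rw [Fintype.card_subtype_compl, Fintype.card_subtype_eq]
    simp
  · simp

/-- The number of binary sequences of length `B = (⌈log k⌉+5)·2^{⌈log k⌉+9}·⌈log n⌉`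
containing no run of `⌈log k⌉+5` consecutive 1's is at most
`2^{B − ⌈log n⌉ − 2⌈log k⌉ − 12}`; equivalently, such sequences can be injectively encoded
into binary sequences of that shorter length. -/
theorem runfree_count_bound (n k : ℕ) (hk : 1 ≤ k) (hkn : k < n) (hn : 2 ≤ n) :
    ({b : List Bool |
        b.length = (Nat.clog 2 k + 5) * 2 ^ (Nat.clog 2 k + 9) * Nat.clog 2 n ∧
        ∀ j : ℕ, ¬runAt k b j} : Set (List Bool)).ncard ≤
      2 ^ ((Nat.clog 2 k + 5) * 2 ^ (Nat.clog 2 k + 9) * Nat.clog 2 n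
            - Nat.clog 2 n - 2 * Nat.clog 2 k - 12) := by
  set q := Nat.clog 2 k with hq
  set c := Nat.clog 2 n with hc
  have hc1 : 1 ≤ c := Nat.clog_pos (by norm_num) hn
  have hqc : q ≤ c := Nat.clog_mono_right 2 hkn.le
  set L := q + 5 with hLdef
  set N := 2 ^ (q + 9) * c with hNdef
  set S : Set (List Bool) := {b : List Bool |
      b.length = L * 2 ^ (q + 9) * c ∧ ∀ j : ℕ, ¬runAt k b j} with hSdef
  have hLpos : 0 < L := by omega
  have hB : L * 2 ^ (q + 9) * c = L * N := by rw [hNdef]; ring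
  -- Step 1: injection into block functions
  have key : S.ncard ≤ (2 ^ L - 1) ^ N := by
    rw [← Nat.card_coe_set_eq, ← card_blocks L N]
    apply Nat.card_le_card_of_injective
      (f := fun (b : S) (i : Fin N) =>
        (⟨fun t : Fin L => (b : List Bool).getD (i * L + t) false, by
          intro hcon
          apply b.2.2 (↑i * L)
          intro t ht
          rw [Finset.mem_range] at ht
          exact congrFun hcon ⟨t, ht⟩⟩ :
          {g : Fin L → Bool // g ≠ fun _ => true}))
    intro b b' hbb'
    apply Subtype.ext
    apply List.ext_getElem (by rw [b.2.1, b'.2.1])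
    intro j hj hj'
    have hjB : j < L * N := by rw [← hB, ← b.2.1]; exact hj
    have hiN : j / L < N := Nat.div_lt_of_lt_mul (by omega)
    have htL : j % L < L := Nat.mod_lt _ hLpos
    have hidx : j / L * L + j % L = j := by
      rw [mul_comm]; exact Nat.div_add_mod j L
    have h := congrFun (congrArg Subtype.val (congrFun hbb' ⟨j / L, hiN⟩)) ⟨j % L, htL⟩
    simp only at h
    rw [hidx] at h
    rwa [List.getD_eq_getElem _ _ hj, List.getD_eq_getElem _ _ hj'] at h
  -- Step 2: arithmetic
  have h16 : 16 * 2 ^ L = 2 ^ (q + 9) := by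
    rw [hLdef, show q + 9 = (q + 5) + 4 by ring, pow_add]; ring
  have e1 : (2 ^ L - 1) ^ N = ((2 ^ L - 1) ^ (16 * 2 ^ L)) ^ c := by
    rw [← pow_mul, hNdef, h16]
  have h3 := aux3 L (by omega)
  have e2 : ((2 ^ L - 1) ^ (16 * 2 ^ L)) ^ c ≤ 2 ^ ((L * (16 * 2 ^ L) - 16) * c) := by
    calc ((2 ^ L - 1) ^ (16 * 2 ^ L)) ^ c ≤ (2 ^ (L * (16 * 2 ^ L) - 16)) ^ c :=
          Nat.pow_le_pow_left h3 c
      _ = 2 ^ ((L * (16 * 2 ^ L) - 16) * c) := (pow_mul 2 _ c).symm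
  have hA : L * (16 * 2 ^ L) = L * 2 ^ (q + 9) := by rw [h16]
  have hexp : (L * (16 * 2 ^ L) - 16) * c ≤ L * 2 ^ (q + 9) * c - c - 2 * q - 12 := by
    rw [Nat.sub_mul, hA]
    generalize L * 2 ^ (q + 9) * c = D
    omega
  calc S.ncard ≤ (2 ^ L - 1) ^ N := key
    _ ≤ 2 ^ ((L * (16 * 2 ^ L) - 16) * c) := by rw [e1]; exact e2
    _ ≤ 2 ^ (L * 2 ^ (q + 9) * c - c - 2 * q - 12) :=
        Nat.pow_le_pow_right (by norm_num) hexp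
end

section
/- If a binary sequence c of length n satisfies: (Property 1) every window of length B contains a run of ⌈log k⌉+5 consecutive 1's, and (Property 2) every window of length R contains a subwindow of length 3k+⌈log k⌉+4 in which no run of ⌈log k⌉+5 consecutive 1's starts within its first 3k positions, then consecutive 1-entries of the synchronization vector 1_sync(c) (with sentinels t_0 = 0 and t_{J+1} = n+1) are at distance at most B + R + 1. -/
/-!
Property 2, applied to the window starting just after `a`, gives a position `j` such that no run
of `⌈log k⌉ + 5` ones starts in `[j, j + 3k)`; Property 1, applied at `j`, gives a run starting
in `[j, j + B)`. The first run starting at or after `j` then starts at some `i ≥ j + 3k` and no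
run starts in the `3k - 1` positions before it, so `i` is a synchronization position, and
`a < i ≤ a + B + R + 1`.
-/

/-- There is a run of `⌈log k⌉ + 5` consecutive 1's in `c` starting at (1-based) position `j`. -/
def hasRun (k : ℕ) (c : List Bool) (j : ℕ) : Bool :=
  (List.range (Nat.clog 2 k + 5)).all fun t => c.getD (j + t - 1) false

/-- The window `(c_{i-3k+1}, …, c_{i+⌈log k⌉+4})` is a synchronization pattern: it lies inside
`c`, ends with `⌈log k⌉ + 5` consecutive 1's (starting at position `i`), and no run of
`⌈log k⌉ + 5` consecutive 1's starts at one of the first `3k - 1` window positions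
(i.e. at a position `j` with `i - 3k + 1 ≤ j < i`). -/
def syncAt (k : ℕ) (c : List Bool) (i : ℕ) : Bool :=
  decide (3 * k ≤ i) && decide (i + Nat.clog 2 k + 4 ≤ c.length) && hasRun k c i &&
    ((List.range' (i - 3 * k + 1) (i - (i - 3 * k + 1))).all fun j => !hasRun k c j)

/-- The synchronization vector of `c`: its `i`-th (1-based) entry is 1 iff a synchronization
pattern occurs at position `i`. -/
def syncVec (k : ℕ) (c : List Bool) : List Bool :=
  (List.range c.length).map fun idx => syncAt k c (idx + 1)

section SyncPositions

variable {k : ℕ} {c : List Bool}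

theorem lt_length_of_hasRun {j : ℕ} (h : hasRun k c j = true) :
    j + Nat.clog 2 k + 3 < c.length := by
  have hlast := List.all_eq_true.1 h (Nat.clog 2 k + 4) (List.mem_range.2 (by omega))
  by_contra! hlen
  rw [List.getD_eq_default _ _ (by omega)] at hlast
  exact Bool.false_ne_true hlast

theorem syncAt_eq_true_iff {i : ℕ} :
    syncAt k c i = true ↔
      3 * k ≤ i ∧ hasRun k c i = true ∧ ∀ j, i - 3 * k < j → j < i → hasRun k c j = false := by
  simp only [syncAt, Bool.and_eq_true, decide_eq_true_eq, List.all_eq_true, List.mem_range'_1,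
    Bool.not_eq_true']
  constructor
  · rintro ⟨⟨⟨hki, -⟩, hrun⟩, hfree⟩
    exact ⟨hki, hrun, fun j hlo hhi => hfree j ⟨by omega, by omega⟩⟩
  · rintro ⟨hki, hrun, hfree⟩
    have := lt_length_of_hasRun hrun
    exact ⟨⟨⟨hki, by omega⟩, hrun⟩, fun j ⟨hlo, hhi⟩ => hfree j (by omega) (by omega)⟩

theorem syncVec_getD_pred {i : ℕ} (hi : 1 ≤ i) (hic : i ≤ c.length) :
    (syncVec k c).getD (i - 1) false = syncAt k c i := by
  rw [List.getD_eq_getElem _ _ (by simp only [syncVec, List.length_map, List.length_range]; omega)]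
  simp only [syncVec, List.getElem_map, List.getElem_range, Nat.sub_add_cancel hi]

theorem exists_syncAt_of_runFree {j m : ℕ}
    (hfree : ∀ m ∈ Finset.Ico j (j + 3 * k), hasRun k c m = false)
    (hjm : j ≤ m) (hm : hasRun k c m = true) :
    ∃ i, j + 3 * k ≤ i ∧ i ≤ m ∧ syncAt k c i = true := by
  have hex : ∃ i, j ≤ i ∧ hasRun k c i = true := ⟨m, hjm, hm⟩
  obtain ⟨hji, hrun⟩ := Nat.find_spec hex
  have hfirst : ∀ p < Nat.find hex, j ≤ p → hasRun k c p = false := fun p hp hjp => by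
    simpa [hjp] using Nat.find_min hex hp
  have hstart : j + 3 * k ≤ Nat.find hex := by
    by_contra! hlt
    rw [hfree _ (Finset.mem_Ico.2 ⟨hji, hlt⟩)] at hrun
    exact Bool.false_ne_true hrun
  refine ⟨Nat.find hex, hstart, Nat.find_min' hex ⟨hjm, hm⟩, syncAt_eq_true_iff.2
    ⟨by omega, hrun, fun p hlo hhi => hfirst p hhi (by omega)⟩⟩

end SyncPositions

theorem properties_imply_k_dense_general (n k : ℕ) (c : List Bool) (hc : c.length = n)
    (B R : ℕ)
    (hprop1 : ∀ i, 1 ≤ i → i + B - 1 ≤ n →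
      ∃ j ∈ Finset.Icc i (i + B - (Nat.clog 2 k + 5)), hasRun k c j = true)
    (hprop2 : ∀ i, 1 ≤ i → i + R - 1 ≤ n →
      ∃ j ∈ Finset.Icc i (i + R - (3 * k + Nat.clog 2 k + 4)),
        ∀ m ∈ Finset.Ico j (j + 3 * k), hasRun k c m = false) :
    ∀ a : ℕ,
      (a = 0 ∨ a = n + 1 ∨ (1 ≤ a ∧ (syncVec k c).getD (a - 1) false = true)) →
      a ≤ n →
      ∃ b : ℕ,
        (b = 0 ∨ b = n + 1 ∨ (1 ≤ b ∧ (syncVec k c).getD (b - 1) false = true)) ∧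
        a < b ∧ b ≤ a + B + R + 1 := by
  intro a _ han
  by_cases hend : n ≤ a + B + R
  · exact ⟨n + 1, Or.inr (Or.inl rfl), by omega, by omega⟩
  obtain ⟨j, hj, hfree⟩ := hprop2 (a + 1) (by omega) (by omega)
  rw [Finset.mem_Icc] at hj
  obtain ⟨m, hm, hrun⟩ := hprop1 j (by omega) (by omega)
  rw [Finset.mem_Icc] at hm
  obtain ⟨i, hji, him, hsync⟩ := exists_syncAt_of_runFree hfree hm.1 hrun
  have hin : i ≤ c.length := by
    have := lt_length_of_hasRun (syncAt_eq_true_iff.1 hsync).2.1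
    omega
  refine ⟨i, Or.inr (Or.inr ⟨by omega, ?_⟩), by omega, by omega⟩
  rwa [syncVec_getD_pred (by omega) hin]

/-- If a binary sequence `c` of length `n` satisfies Property 1 (every window of length `B`
contains a run of `⌈log k⌉+5` ones) and Property 2 (every window of length `R` contains a
subwindow of length `3k+⌈log k⌉+4` in which no run of `⌈log k⌉+5` ones starts within its
first `3k` positions), then consecutive 1-entries of `1_sync(c)`, with sentinels `0` and
`n+1`, are at distance at most `B + R + 1`; i.e. `c` is `k`-dense. -/
theorem properties_imply_k_dense (n k : ℕ) (hk : 1 ≤ k) (c : List Bool) (hc : c.length = n)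
    (B R : ℕ)
    (hB : B = (Nat.clog 2 k + 5) * 2 ^ (Nat.clog 2 k + 9) * Nat.clog 2 n)
    (hR : R = (3 * k + Nat.clog 2 k + 4) * (Nat.clog 2 n + 9 + Nat.clog 2 k))
    (hprop1 : ∀ i, 1 ≤ i → i + B - 1 ≤ n →
      ∃ j ∈ Finset.Icc i (i + B - (Nat.clog 2 k + 5)), hasRun k c j = true)
    (hprop2 : ∀ i, 1 ≤ i → i + R - 1 ≤ n →
      ∃ j ∈ Finset.Icc i (i + R - (3 * k + Nat.clog 2 k + 4)),
        ∀ m ∈ Finset.Ico j (j + 3 * k), hasRun k c m = false) :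
    ∀ a : ℕ,
      (a = 0 ∨ a = n + 1 ∨ (1 ≤ a ∧ (syncVec k c).getD (a - 1) false = true)) →
      a ≤ n →
      ∃ b : ℕ,
        (b = 0 ∨ b = n + 1 ∨ (1 ≤ b ∧ (syncVec k c).getD (b - 1) false = true)) ∧
        a < b ∧ b ≤ a + B + R + 1 :=
  properties_imply_k_dense_general n k c hc B R hprop1 hprop2
end

section
/- A single deletion in a binary sequence c can destroy at most one synchronization pattern and generate at most one synchronization pattern; consequently the synchronization vector of the resulting sequence can be obtained from 1_sync(c) by at most 2 deletions and 1 insertion. -/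
private lemma hasRun_iff (k : ℕ) (c : List Bool) (j : ℕ) :
    hasRun k c j = true ↔ ∀ t, t < Nat.clog 2 k + 5 → c.getD (j + t - 1) false = true := by
  simp [hasRun, List.all_eq_true, List.mem_range]

private lemma run_pos {k : ℕ} {x : List Bool} {j : ℕ} (h : hasRun k x j = true) {m : ℕ}
    (h1 : j ≤ m) (h2 : m < j + Nat.clog 2 k + 5) : x.getD (m - 1) false = true := by
  have := (hasRun_iff k x j).mp h (m - j) (by omega)
  have e : j + (m - j) - 1 = m - 1 := by omega
  rwa [e] at this

private lemma run_intro {k : ℕ} {x : List Bool} {j : ℕ}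
    (h : ∀ m, j ≤ m → m < j + Nat.clog 2 k + 5 → x.getD (m - 1) false = true) :
    hasRun k x j = true := by
  rw [hasRun_iff]
  intro t ht
  exact h (j + t) (by omega) (by omega)

private lemma syncAt_iff {k : ℕ} (hk : 1 ≤ k) (c : List Bool) (i : ℕ) :
    syncAt k c i = true ↔ 3 * k ≤ i ∧ i + Nat.clog 2 k + 4 ≤ c.length ∧ hasRun k c i = true ∧
      ∀ j, i < j + 3 * k → j < i → hasRun k c j = false := by
  simp only [syncAt, Bool.and_eq_true, decide_eq_true_eq, List.all_eq_true, List.mem_range'_1,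
    Bool.not_eq_true']
  constructor
  · rintro ⟨⟨⟨h1, h2⟩, h3⟩, h4⟩
    exact ⟨h1, h2, h3, fun j hj1 hj2 => h4 j ⟨by omega, by omega⟩⟩
  · rintro ⟨h1, h2, h3, h4⟩
    exact ⟨⟨⟨h1, h2⟩, h3⟩, fun j hj => h4 j (by omega) (by omega)⟩

private lemma sync_sep {k : ℕ} (hk : 1 ≤ k) {x : List Bool} {i i' : ℕ}
    (h : syncAt k x i = true) (h' : syncAt k x i' = true) (hlt : i < i') :
    i + 3 * k ≤ i' ∧ i + (Nat.clog 2 k + 5) ≤ i' := by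
  rw [syncAt_iff hk] at h h'
  obtain ⟨h1, h2, h3, h4⟩ := h
  obtain ⟨h1', h2', h3', h4'⟩ := h'
  have hsep1 : i + 3 * k ≤ i' := by
    by_contra hc
    push_neg at hc
    have := h4' i (by omega) hlt
    rw [this] at h3
    exact absurd h3 (by simp)
  refine ⟨hsep1, ?_⟩
  by_contra hc
  push_neg at hc
  have hrun : hasRun k x (i' - 1) = true := by
    apply run_intro
    intro m hm1 hm2
    by_cases hcase : m < i + Nat.clog 2 k + 5
    · exact run_pos h3 (by omega) hcase
    · exact run_pos h3' (by omega) (by omega)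
  have := h4' (i' - 1) (by omega) (by omega)
  rw [this] at hrun
  exact absurd hrun (by simp)

private lemma getD_erase_lt (c : List Bool) (n m : ℕ) (h : m < n) :
    (c.eraseIdx n).getD m false = c.getD m false := by
  simp [List.getD_eq_getElem?_getD, List.getElem?_eraseIdx_of_lt (l := c) h]

private lemma getD_erase_ge (c : List Bool) (n m : ℕ) (h : n ≤ m) :
    (c.eraseIdx n).getD m false = c.getD (m + 1) false := by
  simp [List.getD_eq_getElem?_getD, List.getElem?_eraseIdx_of_ge (l := c) h]

private lemma hasRun_erase_low {k : ℕ} (c : List Bool) (n j : ℕ)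
    (hj : j + Nat.clog 2 k + 4 ≤ n) :
    hasRun k (c.eraseIdx n) j = hasRun k c j := by
  rw [Bool.eq_iff_iff, hasRun_iff, hasRun_iff]
  constructor <;> intro h t ht
  · rw [← getD_erase_lt c n (j + t - 1) (by omega)]
    exact h t ht
  · rw [getD_erase_lt c n (j + t - 1) (by omega)]
    exact h t ht

private lemma hasRun_erase_high {k : ℕ} (c : List Bool) (n j : ℕ) (hj : n + 1 ≤ j) :
    hasRun k (c.eraseIdx n) j = hasRun k c (j + 1) := by
  rw [Bool.eq_iff_iff, hasRun_iff, hasRun_iff]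
  have e : ∀ t : ℕ, j + t - 1 + 1 = j + 1 + t - 1 := by omega
  constructor <;> intro h t ht
  · have := h t ht
    rw [getD_erase_ge c n (j + t - 1) (by omega), e t] at this
    exact this
  · rw [getD_erase_ge c n (j + t - 1) (by omega), e t]
    exact h t ht
private lemma sync_low {k : ℕ} (hk : 1 ≤ k) (c : List Bool) (n₀ : ℕ) (hn : n₀ < c.length)
    (i : ℕ) (hi : i + Nat.clog 2 k + 4 ≤ n₀) :
    syncAt k (c.eraseIdx n₀) i = syncAt k c i := by
  have hlen : (c.eraseIdx n₀).length = c.length - 1 := by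
    rw [List.length_eraseIdx]
    simp [hn]
  rw [Bool.eq_iff_iff, syncAt_iff hk, syncAt_iff hk, hlen]
  constructor
  · rintro ⟨h1, h2, h3, h4⟩
    refine ⟨h1, by omega, by rwa [hasRun_erase_low c n₀ i hi] at h3, fun j hj1 hj2 => ?_⟩
    rw [← hasRun_erase_low c n₀ j (by omega)]
    exact h4 j hj1 hj2
  · rintro ⟨h1, h2, h3, h4⟩
    refine ⟨h1, by omega, by rwa [hasRun_erase_low c n₀ i hi], fun j hj1 hj2 => ?_⟩
    rw [hasRun_erase_low c n₀ j (by omega)]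
    exact h4 j hj1 hj2

private lemma sync_high {k : ℕ} (hk : 1 ≤ k) (c : List Bool) (n₀ : ℕ) (hn : n₀ < c.length)
    (i : ℕ) (hi : n₀ + 1 + 3 * k ≤ i) :
    syncAt k (c.eraseIdx n₀) (i - 1) = syncAt k c i := by
  have hlen : (c.eraseIdx n₀).length = c.length - 1 := by
    rw [List.length_eraseIdx]; simp [hn]
  have hrun : hasRun k (c.eraseIdx n₀) (i - 1) = hasRun k c i := by
    rw [hasRun_erase_high c n₀ (i - 1) (by omega)]
    congr 1
    omega
  rw [Bool.eq_iff_iff, syncAt_iff hk, syncAt_iff hk, hlen]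
  constructor
  · rintro ⟨h1, h2, h3, h4⟩
    refine ⟨by omega, by omega, by rwa [hrun] at h3, fun j hj1 hj2 => ?_⟩
    have := h4 (j - 1) (by omega) (by omega)
    rw [hasRun_erase_high c n₀ (j - 1) (by omega)] at this
    have e : j - 1 + 1 = j := by omega
    rwa [e] at this
  · rintro ⟨h1, h2, h3, h4⟩
    refine ⟨by omega, by omega, by rwa [hrun], fun j hj1 hj2 => ?_⟩
    rw [hasRun_erase_high c n₀ j (by omega)]
    exact h4 (j + 1) (by omega) (by omega)

private lemma sync_mid_c {k : ℕ} (hk : 1 ≤ k) (c : List Bool) (n₀ : ℕ) (hn : n₀ < c.length)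
    {i i' : ℕ} (hi : syncAt k c i = true) (hi' : syncAt k c i' = true) (hlt : i < i')
    (hp1 : n₀ + 1 ≤ i + Nat.clog 2 k + 4) (hp2 : i' ≤ n₀ + 3 * k) :
    syncAt k (c.eraseIdx n₀) (i' - 1) = true := by
  have hlen : (c.eraseIdx n₀).length = c.length - 1 := by
    rw [List.length_eraseIdx]; simp [hn]
  obtain ⟨hsep1, hsep2⟩ := sync_sep hk hi hi' hlt
  rw [syncAt_iff hk] at hi hi'
  obtain ⟨g1, g2, g3, g4⟩ := hi
  obtain ⟨g1', g2', g3', g4'⟩ := hi'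
  -- deleted position holds a 1 (it is inside the run of i)
  have cp : c.getD n₀ false = true := by
    have := run_pos g3 (show i ≤ n₀ + 1 by omega) (show n₀ + 1 < i + Nat.clog 2 k + 5 by omega)
    have e : n₀ + 1 - 1 = n₀ := by omega
    rwa [e] at this
  rw [syncAt_iff hk, hlen]
  refine ⟨by omega, by omega, ?_, ?_⟩
  · rw [hasRun_erase_high c n₀ (i' - 1) (by omega)]
    have e : i' - 1 + 1 = i' := by omega
    rwa [e]
  · intro q hq1 hq2
    by_cases hc : n₀ + 1 ≤ q
    · rw [hasRun_erase_high c n₀ q hc]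
      exact g4' (q + 1) (by omega) (by omega)
    · -- q ≤ n₀
      by_contra hcon
      rw [Bool.not_eq_false] at hcon
      have hq3 : i ≤ q := by omega
      have hrun : hasRun k c (q + 1) = true := by
        apply run_intro
        intro m hm1 hm2
        rcases lt_trichotomy m (n₀ + 1) with hm | hm | hm
        · rw [← getD_erase_lt c n₀ (m - 1) (by omega)]
          exact run_pos hcon (by omega) (by omega)
        · have e : m - 1 = n₀ := by omega
          rw [e]; exact cp
        · have e : m - 1 = (m - 1 - 1) + 1 := by omega
          rw [e, ← getD_erase_ge c n₀ (m - 1 - 1) (by omega)]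
          have := run_pos hcon (show q ≤ m - 1 by omega) (show m - 1 < q + Nat.clog 2 k + 5 by omega)
          have e2 : m - 1 - 1 = (m - 1) - 1 := by omega
          rwa [e2]
      have := g4' (q + 1) (by omega) (by omega)
      rw [this] at hrun
      exact absurd hrun (by simp)

private lemma sync_mid_d {k : ℕ} (hk : 1 ≤ k) (c : List Bool) (n₀ : ℕ) (hn : n₀ < c.length)
    {j j' : ℕ} (hj : syncAt k (c.eraseIdx n₀) j = true)
    (hj' : syncAt k (c.eraseIdx n₀) j' = true) (hlt : j < j')
    (hp1 : n₀ + 1 ≤ j + Nat.clog 2 k + 4) (hp2 : j' + 1 ≤ n₀ + 3 * k) :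
    syncAt k c (j' + 1) = true := by
  have hlen : (c.eraseIdx n₀).length = c.length - 1 := by
    rw [List.length_eraseIdx]; simp [hn]
  obtain ⟨hsep1, hsep2⟩ := sync_sep hk hj hj' hlt
  rw [syncAt_iff hk] at hj hj'
  obtain ⟨g1, g2, g3, g4⟩ := hj
  obtain ⟨g1', g2', g3', g4'⟩ := hj'
  rw [hlen] at g2'
  rw [syncAt_iff hk]
  refine ⟨by omega, by omega, ?_, ?_⟩
  · rw [← hasRun_erase_high c n₀ j' (by omega)]
    exact g3'
  · intro q hq1 hq2
    by_cases hc : n₀ + 2 ≤ q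
    · have e : q = q - 1 + 1 := by omega
      rw [e, ← hasRun_erase_high c n₀ (q - 1) (by omega)]
      exact g4' (q - 1) (by omega) (by omega)
    · -- q ≤ n₀ + 1
      by_contra hcon
      rw [Bool.not_eq_false] at hcon
      have hq3 : j + 2 ≤ q := by omega
      have hrun : hasRun k (c.eraseIdx n₀) (q - 1) = true := by
        apply run_intro
        intro m hm1 hm2
        by_cases hm : m < j + Nat.clog 2 k + 5
        · exact run_pos g3 (by omega) hm
        · -- m ≥ j + clog + 5 > n₀ : maps to c position m + 1
          rw [getD_erase_ge c n₀ (m - 1) (by omega)]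
          have := run_pos hcon (show q ≤ m + 1 by omega)
            (show m + 1 < q + Nat.clog 2 k + 5 by omega)
          have e : m + 1 - 1 = m - 1 + 1 := by omega
          rwa [e] at this
      have := g4' (q - 1) (by omega) (by omega)
      rw [this] at hrun
      exact absurd hrun (by simp)
private lemma tr_lt {v : List Bool} {r : ℕ} (h : v.getD r false = true) : r < v.length := by
  by_contra hc
  rw [List.getD_eq_getElem?_getD, List.getElem?_eq_none (by omega)] at h
  simp at h

private lemma getD_take' {v : List Bool} {s r : ℕ} (h : r < s) :
    (v.take s).getD r false = v.getD r false := by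
  rw [List.getD_eq_getElem?_getD, List.getD_eq_getElem?_getD, List.getElem?_take, if_pos h]

private lemma getD_drop' (v : List Bool) (s r : ℕ) :
    (v.drop s).getD r false = v.getD (s + r) false := by
  rw [List.getD_eq_getElem?_getD, List.getD_eq_getElem?_getD, List.getElem?_drop]

private lemma getD_eq_getElem' (v : List Bool) (m : ℕ) (h : m < v.length) :
    v[m] = v.getD m false := by
  rw [List.getD_eq_getElem v false h]

private lemma one_le_count {v : List Bool} {r : ℕ} (h : v.getD r false = true) :
    1 ≤ v.count true := by
  have hl := tr_lt h
  rw [← getD_eq_getElem' v r hl] at h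
  have : true ∈ v := h ▸ List.getElem_mem hl
  exact List.count_pos_iff.mpr this

private lemma count_split (v : List Bool) (s : ℕ) :
    v.count true = (v.take s).count true + (v.drop s).count true := by
  rw [← List.count_append, List.take_append_drop]

private lemma count_ge_two {v : List Bool} {r s : ℕ} (hrs : r < s)
    (hr : v.getD r false = true) (hs : v.getD s false = true) : 2 ≤ v.count true := by
  have h1 : 1 ≤ (v.take s).count true := one_le_count (r := r) (by rw [getD_take' hrs]; exact hr)
  have h2 : 1 ≤ (v.drop s).count true :=
    one_le_count (r := 0) (by rw [getD_drop']; simpa using hs)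
  rw [count_split v s]
  omega

private lemma count_one_ex {v : List Bool} (h : 1 ≤ v.count true) :
    ∃ r, v.getD r false = true := by
  induction v with
  | nil => simp at h
  | cons a w ih =>
    cases a with
    | true => exact ⟨0, by simp⟩
    | false =>
      rw [List.count_cons, if_neg (by simp : ¬((false == true) = true))] at h
      obtain ⟨r, hr⟩ := ih (by omega)
      exact ⟨r + 1, by simpa using hr⟩

private lemma count_two_ex {v : List Bool} (h : 2 ≤ v.count true) :
    ∃ r s, r < s ∧ v.getD r false = true ∧ v.getD s false = true := by
  induction v with
  | nil => simp at h
  | cons a w ih =>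
    rw [List.count_cons] at h
    cases a with
    | true =>
      simp only [if_pos (by simp : ((true == true) = true))] at h
      obtain ⟨r, hr⟩ := count_one_ex (v := w) (by omega)
      exact ⟨0, r + 1, by omega, by simp, by simpa using hr⟩
    | false =>
      simp only [if_neg (by simp : ¬((false == true) = true))] at h
      obtain ⟨r, s, hrs, hr, hs⟩ := ih (by omega)
      exact ⟨r + 1, s + 1, by omega, by simpa using hr, by simpa using hs⟩

private lemma count_three_ex {v : List Bool} (h : 3 ≤ v.count true) :
    ∃ r s t, r < s ∧ s < t ∧ v.getD r false = true ∧ v.getD s false = true ∧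
      v.getD t false = true := by
  induction v with
  | nil => simp at h
  | cons a w ih =>
    rw [List.count_cons] at h
    cases a with
    | true =>
      simp only [if_pos (by simp : ((true == true) = true))] at h
      obtain ⟨r, s, hrs, hr, hs⟩ := count_two_ex (v := w) (by omega)
      exact ⟨0, r + 1, s + 1, by omega, by omega, by simp, by simpa using hr, by simpa using hs⟩
    | false =>
      simp only [if_neg (by simp : ¬((false == true) = true))] at h
      obtain ⟨r, s, t, hrs, hst, hr, hs, ht⟩ := ih (by omega)
      exact ⟨r + 1, s + 1, t + 1, by omega, by omega, by simpa using hr, by simpa using hs,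
        by simpa using ht⟩

private lemma count_tf (v : List Bool) : v.count true + v.count false = v.length := by
  induction v with
  | nil => simp
  | cons a w ih =>
    cases a <;> simp [List.count_cons] <;> omega

private lemma count_le_two {v : List Bool} {G : ℕ}
    (hgap : ∀ r s, r < s → v.getD r false = true → v.getD s false = true → r + G ≤ s)
    (hlen : v.length ≤ 2 * G) : v.count true ≤ 2 := by
  by_contra hc
  push_neg at hc
  obtain ⟨r, s, t, hrs, hst, hr, hs, ht⟩ := count_three_ex (v := v) (by omega)
  have g1 := hgap r s hrs hr hs
  have g2 := hgap s t hst hs ht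
  have := tr_lt ht
  omega

private lemma decomp (v : List Bool) (lo hi : ℕ) (h : lo ≤ hi) :
    v.take lo ++ ((v.take hi).drop lo ++ v.drop hi) = v := by
  have h1 : v.take lo = (v.take hi).take lo := by rw [List.take_take, min_eq_left h]
  rw [h1, ← List.append_assoc, List.take_append_drop, List.take_append_drop]

private lemma getD_syncVec (k : ℕ) (c : List Bool) (m : ℕ) (h : m < c.length) :
    (syncVec k c).getD m false = syncAt k c (m + 1) := by
  have h2 : m < ((List.range c.length).map fun idx => syncAt k c (idx + 1)).length := by
    simpa using h
  unfold syncVec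
  rw [List.getD_eq_getElem _ _ h2, List.getElem_map, List.getElem_range]

private lemma length_syncVec (k : ℕ) (c : List Bool) : (syncVec k c).length = c.length := by
  simp [syncVec]

private lemma getD_mid (v : List Bool) (lo hi r : ℕ) (hr : r < hi - lo) (hhi : hi ≤ v.length) :
    ((v.take hi).drop lo).getD r false = v.getD (lo + r) false := by
  rw [getD_drop', getD_take' (show lo + r < hi by omega)]

private lemma exists_eraseIdx {d c : List Bool} (h : d.Sublist c) :
    d.length + 1 = c.length → ∃ m, m < c.length ∧ d = c.eraseIdx m := by
  induction h with
  | slnil => intro hl; simp at hl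
  | @cons l₁ l₂ a h ih =>
    intro hl
    have hlen : l₁.length = l₂.length := by simp at hl; omega
    have := h.eq_of_length hlen
    exact ⟨0, by simp, by simp [this]⟩
  | @cons_cons l₁ l₂ a h ih =>
    intro hl
    obtain ⟨m, hm, he⟩ := ih (by simp at hl; omega)
    exact ⟨m + 1, by simp; omega, by simp [List.eraseIdx_cons_succ, ← he]⟩
private lemma ext_getD {v w : List Bool} (hl : v.length = w.length)
    (h : ∀ m, m < v.length → v.getD m false = w.getD m false) : v = w := by
  apply List.ext_getElem hl
  intro m h1 h2
  have := h m h1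
  rwa [List.getD_eq_getElem v false h1, List.getD_eq_getElem w false h2] at this

/-- A single deletion in `c` destroys at most one synchronization pattern and generates at most
one (so the number of 1's in the synchronization vector changes by at most one); consequently
the synchronization vector of the resulting sequence `d` can be obtained from `1_sync(c)` by
at most 2 deletions and 1 insertion. -/
theorem single_deletion_syncVec (k : ℕ) (hk : 1 ≤ k) (c d : List Bool)
    (hdel : d.Sublist c ∧ d.length + 1 = c.length) :
    (((syncVec k c).count true : ℤ) - 1 ≤ ((syncVec k d).count true : ℤ) ∧
      ((syncVec k d).count true : ℤ) ≤ ((syncVec k c).count true : ℤ) + 1) ∧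
    ∃ u : List Bool, u.Sublist (syncVec k c) ∧ u.Sublist (syncVec k d) ∧
      (syncVec k c).length ≤ u.length + 2 ∧ (syncVec k d).length ≤ u.length + 1 := by
  obtain ⟨hsub, hlend⟩ := hdel
  obtain ⟨n₀, hn, rfl⟩ := exists_eraseIdx hsub hlend
  set l := Nat.clog 2 k with hldef
  set n := c.length with hndef
  set G := max (3 * k) (l + 5) with hGdef
  have hG1 : 3 * k ≤ G := le_max_left _ _
  have hG2 : l + 5 ≤ G := le_max_right _ _
  set lo := n₀ + 1 - (l + 5) with hlodef
  set hi := min n (n₀ + 3 * k) with hhidef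
  have hhi1 : hi ≤ n := min_le_left _ _
  have hhi2 : hi ≤ n₀ + 3 * k := min_le_right _ _
  have hhi3 : hi = n ∨ hi = n₀ + 3 * k := min_choice _ _
  set a := syncVec k c with hadef
  set b := syncVec k (c.eraseIdx n₀) with hbdef
  have halen : a.length = n := length_syncVec k c
  have hblen : b.length = n - 1 := by
    rw [hbdef, length_syncVec]; omega
  have hA : ∀ m, m < n → a.getD m false = syncAt k c (m + 1) := fun m hm => getD_syncVec k c m hm
  have hB : ∀ m, m < n - 1 → b.getD m false = syncAt k (c.eraseIdx n₀) (m + 1) := by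
    intro m hm
    exact getD_syncVec k (c.eraseIdx n₀) m (by omega)
  have hPre : a.take lo = b.take lo := by
    apply ext_getD
    · rw [List.length_take, List.length_take]; omega
    · intro m hm
      have hmlo : m < lo := by rw [List.length_take] at hm; omega
      rw [getD_take' hmlo, getD_take' hmlo, hA m (by omega), hB m (by omega)]
      exact (sync_low hk c n₀ hn (m + 1) (by omega)).symm
  have hSuf : a.drop hi = b.drop (hi - 1) := by
    apply ext_getD
    · rw [List.length_drop, List.length_drop]; omega
    · intro t ht
      have htn : hi + t < n := by rw [List.length_drop] at ht; omega
      rw [getD_drop', getD_drop', hA (hi + t) (by omega), hB (hi - 1 + t) (by omega)]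
      have hcase : hi = n₀ + 3 * k := by omega
      have hh := sync_high hk c n₀ hn (hi + t + 1) (by omega)
      have e : hi + t + 1 - 1 = hi - 1 + t + 1 := by omega
      rw [e] at hh
      exact hh.symm
  have Ea := decomp a lo hi (by omega)
  have Eb := decomp b lo (hi - 1) (by omega)
  set Ma := (a.take hi).drop lo with hMadef
  set Mb := (b.take (hi - 1)).drop lo with hMbdef
  have hMaLen : Ma.length = hi - lo := by
    rw [hMadef, List.length_drop, List.length_take]; omega
  have hMbLen : Mb.length = hi - 1 - lo := by
    rw [hMbdef, List.length_drop, List.length_take]; omega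
  have hMaD : ∀ r, r < hi - lo → Ma.getD r false = syncAt k c (lo + r + 1) := by
    intro r hr
    rw [hMadef, getD_mid a lo hi r hr (by omega), hA (lo + r) (by omega)]
  have hMbD : ∀ r, r < hi - 1 - lo →
      Mb.getD r false = syncAt k (c.eraseIdx n₀) (lo + r + 1) := by
    intro r hr
    rw [hMbdef, getD_mid b lo (hi - 1) r hr (by omega), hB (lo + r) (by omega)]
  have hca : Ma.count true ≤ 2 := by
    apply count_le_two (G := G)
    · intro r s hrs hr hs
      have hr' := tr_lt hr
      have hs' := tr_lt hs
      rw [hMaLen] at hr' hs'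
      rw [hMaD r hr'] at hr
      rw [hMaD s hs'] at hs
      have hsep := sync_sep hk hr hs (by omega)
      rcases max_choice (3 * k) (l + 5) with hG3 | hG3 <;> omega
    · rw [hMaLen]; omega
  have hcb : Mb.count true ≤ 2 := by
    apply count_le_two (G := G)
    · intro r s hrs hr hs
      have hr' := tr_lt hr
      have hs' := tr_lt hs
      rw [hMbLen] at hr' hs'
      rw [hMbD r hr'] at hr
      rw [hMbD s hs'] at hs
      have hsep := sync_sep hk hr hs (by omega)
      rcases max_choice (3 * k) (l + 5) with hG3 | hG3 <;> omega
    · rw [hMbLen]; omega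
  have hkey2 : Ma.count true ≤ Mb.count true + 1 := by
    rcases le_or_gt (Ma.count true) 1 with h1 | h1
    · omega
    · obtain ⟨r, s, hrs, hr, hs⟩ := count_two_ex (v := Ma) (by omega)
      have hr' := tr_lt hr
      have hs' := tr_lt hs
      rw [hMaLen] at hr' hs'
      rw [hMaD r hr'] at hr
      rw [hMaD s hs'] at hs
      have hd := sync_mid_c hk c n₀ hn hr hs (by omega) (by omega) (by omega)
      have e : lo + s + 1 - 1 = lo + (s - 1) + 1 := by omega
      rw [e] at hd
      have : 1 ≤ Mb.count true :=
        one_le_count (r := s - 1) (by rw [hMbD (s - 1) (by omega)]; exact hd)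
      omega
  have hkey1 : Mb.count true ≤ Ma.count true + 1 := by
    rcases le_or_gt (Mb.count true) 1 with h1 | h1
    · omega
    · obtain ⟨r, s, hrs, hr, hs⟩ := count_two_ex (v := Mb) (by omega)
      have hr' := tr_lt hr
      have hs' := tr_lt hs
      rw [hMbLen] at hr' hs'
      rw [hMbD r hr'] at hr
      rw [hMbD s hs'] at hs
      have hc2 : syncAt k c (lo + s + 1 + 1) = true :=
        sync_mid_d hk c n₀ hn hr hs (by omega) (by omega) (by omega)
      have e : lo + (s + 1) + 1 = lo + s + 1 + 1 := by omega
      have : 1 ≤ Ma.count true :=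
        one_le_count (r := s + 1) (by rw [hMaD (s + 1) (by omega), e]; exact hc2)
      omega
  have hcount : a.count true + Mb.count true = b.count true + Ma.count true := by
    have e1 : a.count true =
        (a.take lo).count true + (Ma.count true + (a.drop hi).count true) := by
      conv_lhs => rw [← Ea]
      rw [List.count_append, List.count_append]
    have e2 : b.count true =
        (b.take lo).count true + (Mb.count true + (b.drop (hi - 1)).count true) := by
      conv_lhs => rw [← Eb]
      rw [List.count_append, List.count_append]
    rw [hPre, hSuf] at e1
    omega
  refine ⟨⟨by omega, by omega⟩, ?_⟩
  rcases le_or_gt (Mb.count true) 1 with hcb1 | hcb2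
  · -- at most one sync pattern in the affected window of d : all-zero middle works
    have hXa : (List.replicate (hi - lo - 2) false).Sublist Ma := by
      rw [List.replicate_sublist_iff]
      have htf := count_tf Ma
      omega
    have hXb : (List.replicate (hi - lo - 2) false).Sublist Mb := by
      rw [List.replicate_sublist_iff]
      have htf := count_tf Mb
      omega
    refine ⟨a.take lo ++ (List.replicate (hi - lo - 2) false ++ a.drop hi), ?_, ?_, ?_, ?_⟩
    · conv_rhs => rw [← Ea]
      exact (List.Sublist.refl _).append (hXa.append (List.Sublist.refl _))
    · rw [hPre, hSuf]
      conv_rhs => rw [← Eb]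
      exact (List.Sublist.refl _).append (hXb.append (List.Sublist.refl _))
    · simp only [List.length_append, List.length_replicate, List.length_take,
        List.length_drop, halen]
      omega
    · simp only [List.length_append, List.length_replicate, List.length_take,
        List.length_drop, halen, hblen]
      omega
  · -- two sync patterns in the affected window of d
    obtain ⟨r, s, hrs, hr, hs⟩ := count_two_ex (v := Mb) (by omega)
    have hr' := tr_lt hr
    have hs' := tr_lt hs
    rw [hMbLen] at hr' hs'
    have hrD := hr
    have hsD := hs
    rw [hMbD r (by omega)] at hrD
    rw [hMbD s (by omega)] at hsD
    have hc2 : syncAt k c (lo + s + 1 + 1) = true :=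
      sync_mid_d hk c n₀ hn hrD hsD (by omega) (by omega) (by omega)
    have hMas : Ma.getD (s + 1) false = true := by
      have e : lo + (s + 1) + 1 = lo + s + 1 + 1 := by omega
      rw [hMaD (s + 1) (by omega), e]
      exact hc2
    have hafter : (Ma.drop (s + 2)).count true = 0 := by
      by_contra hne
      obtain ⟨w, hw⟩ := count_one_ex (v := Ma.drop (s + 2)) (by omega)
      rw [getD_drop'] at hw
      have hwl : s + 2 + w < hi - lo := by
        have := tr_lt hw
        rw [hMaLen] at this
        omega
      have hwD := hw
      rw [hMaD (s + 2 + w) (by omega)] at hwD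
      have hsepd := sync_sep hk hrD hsD (by omega)
      have hsep2 := sync_sep hk hc2 hwD (by omega)
      omega
    have hdropA : Ma.drop (s + 1) = true :: Ma.drop (s + 2) := by
      have hlt : s + 1 < Ma.length := by omega
      have e : s + 1 + 1 = s + 2 := by omega
      rw [List.drop_eq_getElem_cons hlt, e]
      congr 1
      rw [getD_eq_getElem' Ma (s + 1) hlt]
      exact hMas
    have hdropB : Mb.drop s = true :: Mb.drop (s + 1) := by
      have hlt : s < Mb.length := by omega
      rw [List.drop_eq_getElem_cons hlt]
      congr 1
      rw [getD_eq_getElem' Mb s hlt]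
      exact hs
    have hcnt_take_s1 : 2 ≤ (Mb.take (s + 1)).count true := by
      apply count_ge_two (r := r) (s := s) hrs
      · rw [getD_take' (by omega)]; exact hr
      · rw [getD_take' (by omega)]; exact hs
    have hXa : (List.replicate (s - 1) false ++
        true :: List.replicate (hi - lo - (s + 2)) false).Sublist Ma := by
      have h1 : (List.replicate (s - 1) false).Sublist (Ma.take (s + 1)) := by
        rw [List.replicate_sublist_iff]
        have htf := count_tf (Ma.take (s + 1))
        have hclte : (Ma.take (s + 1)).count true ≤ Ma.count true :=
          (List.take_sublist _ _).count_le true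
        have hlt : (Ma.take (s + 1)).length = s + 1 := by rw [List.length_take]; omega
        omega
      have h2 : (List.replicate (hi - lo - (s + 2)) false).Sublist (Ma.drop (s + 2)) := by
        rw [List.replicate_sublist_iff]
        have htf := count_tf (Ma.drop (s + 2))
        have hld : (Ma.drop (s + 2)).length = hi - lo - (s + 2) := by
          rw [List.length_drop]; omega
        omega
      have h2' : (true :: List.replicate (hi - lo - (s + 2)) false).Sublist (Ma.drop (s + 1)) := by
        rw [hdropA]
        exact List.Sublist.cons₂ true h2
      exact (List.take_append_drop (s + 1) Ma) ▸ (h1.append h2')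
    have hXb : (List.replicate (s - 1) false ++
        true :: List.replicate (hi - lo - (s + 2)) false).Sublist Mb := by
      have h1 : (List.replicate (s - 1) false).Sublist (Mb.take s) := by
        rw [List.replicate_sublist_iff]
        have htf := count_tf (Mb.take s)
        have hlt : (Mb.take s).length = s := by rw [List.length_take]; omega
        have hsplit := count_split Mb s
        have hdge : 1 ≤ (Mb.drop s).count true := by
          rw [hdropB, List.count_cons]
          simp
        omega
      have h2 : (List.replicate (hi - lo - (s + 2)) false).Sublist (Mb.drop (s + 1)) := by
        rw [List.replicate_sublist_iff]
        have htf := count_tf (Mb.drop (s + 1))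
        have hld : (Mb.drop (s + 1)).length = hi - 1 - lo - (s + 1) := by
          rw [List.length_drop]; omega
        have hsplit := count_split Mb (s + 1)
        have hctk : (Mb.take (s + 1)).count true ≤ Mb.count true :=
          (List.take_sublist _ _).count_le true
        omega
      have h2' : (true :: List.replicate (hi - lo - (s + 2)) false).Sublist (Mb.drop s) := by
        rw [hdropB]
        exact List.Sublist.cons₂ true h2
      exact (List.take_append_drop s Mb) ▸ (h1.append h2')
    refine ⟨a.take lo ++ ((List.replicate (s - 1) false ++
        true :: List.replicate (hi - lo - (s + 2)) false) ++ a.drop hi), ?_, ?_, ?_, ?_⟩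
    · conv_rhs => rw [← Ea]
      exact (List.Sublist.refl _).append (hXa.append (List.Sublist.refl _))
    · rw [hPre, hSuf]
      conv_rhs => rw [← Eb]
      exact (List.Sublist.refl _).append (hXb.append (List.Sublist.refl _))
    · simp only [List.length_append, List.length_replicate, List.length_take,
        List.length_drop, List.length_cons, halen]
      omega
    · simp only [List.length_append, List.length_replicate, List.length_take,
        List.length_drop, List.length_cons, halen, hblen]
      omega
end
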